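/- arXiv:1202.1203 — 11 statements merged into one kernel-verified Lean document; each statement's English description precedes it below -/
import Mathlib

section
/- For positive integers n and r with 1 ≤ r ≤ n, the number σ(n,r) = (2/n) * C(n, r-1) * C(n+1, r+1) satisfies σ(n,r) = C(n-1, r-1)*C(n+1, r) - C(n-1, r-2)*C(n+1, r+1), and in particular σ(n,r) is an integer. -/
/-- Binomial coefficient with integer arguments, zero when `b < 0` or `b > a`. -/
def zchoose (a b : ℤ) : ℚ :=
  if 0 ≤ b ∧ b ≤ a then (Nat.choose a.toNat b.toNat : ℚ) else 0

lemma zchoose_eq (a b : ℤ) (A B : ℕ) (hB : b = B) (hA : a = A) (h1 : B ≤ A) :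
    zchoose a b = Nat.choose A B := by
  subst hA hB
  simp [zchoose, h1]

lemma key_nat (n r : ℕ) (hr : 1 ≤ r) (hrn : r ≤ n) :
    (r + 1) * (Nat.choose n (r-1) * Nat.choose (n+1) (r+1)) =
      r * (Nat.choose n r * Nat.choose (n+1) r) := by
  have h1 := Nat.add_one_mul_choose_eq n r
  have h2 := Nat.add_one_mul_choose_eq n (r-1)
  rw [show r - 1 + 1 = r by omega] at h2
  calc (r + 1) * (Nat.choose n (r-1) * Nat.choose (n+1) (r+1))
      = Nat.choose n (r-1) * (Nat.choose (n+1) (r+1) * (r+1)) := by ring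
    _ = Nat.choose n (r-1) * ((n+1) * Nat.choose n r) := by rw [← h1]
    _ = ((n+1) * Nat.choose n (r-1)) * Nat.choose n r := by ring
    _ = (Nat.choose (n+1) r * r) * Nat.choose n r := by rw [← h2]
    _ = r * (Nat.choose n r * Nat.choose (n+1) r) := by ring

theorem sigma_integer (n r : ℕ) (hr : 1 ≤ r) (hrn : r ≤ n) :
    (2 / (n : ℚ)) * zchoose n ((r : ℤ) - 1) * zchoose ((n : ℤ) + 1) ((r : ℤ) + 1) =
      zchoose ((n : ℤ) - 1) ((r : ℤ) - 1) * zchoose ((n : ℤ) + 1) r -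
        zchoose ((n : ℤ) - 1) ((r : ℤ) - 2) * zchoose ((n : ℤ) + 1) ((r : ℤ) + 1) ∧
    ∃ m : ℤ,
      (2 / (n : ℚ)) * zchoose n ((r : ℤ) - 1) * zchoose ((n : ℤ) + 1) ((r : ℤ) + 1) = m := by
  have hn0 : (n : ℚ) ≠ 0 := by
    exact_mod_cast Nat.cast_ne_zero.mpr (by omega)
  have e1 : zchoose n ((r : ℤ) - 1) = Nat.choose n (r-1) :=
    zchoose_eq _ _ n (r-1) (by omega) (by omega) (by omega)
  have e2 : zchoose ((n : ℤ) + 1) ((r : ℤ) + 1) = Nat.choose (n+1) (r+1) :=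
    zchoose_eq _ _ (n+1) (r+1) (by omega) (by omega) (by omega)
  have e3 : zchoose ((n : ℤ) - 1) ((r : ℤ) - 1) = Nat.choose (n-1) (r-1) :=
    zchoose_eq _ _ (n-1) (r-1) (by omega) (by omega) (by omega)
  have e4 : zchoose ((n : ℤ) + 1) (r : ℤ) = Nat.choose (n+1) r :=
    zchoose_eq _ _ (n+1) r (by omega) (by omega) (by omega)
  have hkey : ((r : ℚ) + 1) * (Nat.choose n (r-1) * Nat.choose (n+1) (r+1)) =
      r * (Nat.choose n r * Nat.choose (n+1) r) := by
    exact_mod_cast congrArg (Nat.cast : ℕ → ℚ) (key_nat n r hr hrn)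
  have hh1 : (n : ℚ) * Nat.choose (n-1) (r-1) = r * Nat.choose n r := by
    have := Nat.add_one_mul_choose_eq (n-1) (r-1)
    rw [show n - 1 + 1 = n by omega, show r - 1 + 1 = r by omega] at this
    exact_mod_cast congrArg (Nat.cast : ℕ → ℚ) (this.trans (Nat.mul_comm _ _))
  rcases Nat.lt_or_ge r 2 with h2 | h2
  · -- r = 1
    have hr1 : r = 1 := by omega
    subst hr1
    have e5 : zchoose ((n : ℤ) - 1) ((((1:ℕ)) : ℤ) - 2) = 0 := by
      rw [zchoose, if_neg]; omega
    have hknat := key_nat n 1 le_rfl hrn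
    rw [Nat.choose_one_right, Nat.choose_one_right] at hknat
    norm_num at hknat
    have hk : (2:ℚ) * ((n+1).choose 2 : ℚ) = n * (n+1) := by
      exact_mod_cast congrArg (Nat.cast : ℕ → ℚ) hknat
    rw [e1, e2, e3, e4, e5]
    simp only [show (1:ℕ) - 1 = 0 from rfl, Nat.choose_zero_right, Nat.cast_one,
      Nat.choose_one_right, show (1:ℕ) + 1 = 2 from rfl]
    constructor
    · field_simp
      push_cast
      linear_combination hk
    · refine ⟨(n : ℤ) + 1, ?_⟩
      field_simp
      push_cast
      linear_combination hk
  · -- r ≥ 2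
    have e5 : zchoose ((n : ℤ) - 1) ((r : ℤ) - 2) = Nat.choose (n-1) (r-2) :=
      zchoose_eq _ _ (n-1) (r-2) (by omega) (by omega) (by omega)
    have hh2 : (n : ℚ) * Nat.choose (n-1) (r-2) = (r - 1) * Nat.choose n (r-1) := by
      have := Nat.add_one_mul_choose_eq (n-1) (r-2)
      rw [show n - 1 + 1 = n by omega, show r - 2 + 1 = r - 1 by omega] at this
      have := congrArg (Nat.cast : ℕ → ℚ) this
      push_cast at this
      rw [this]
      have : ((r:ℚ) - 1) = ((r - 1 : ℕ) : ℚ) := by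
        push_cast [Nat.cast_sub hr]; ring
      rw [this]; ring
    rw [e1, e2, e3, e4, e5]
    constructor
    · field_simp
      linear_combination hkey - (Nat.choose (n+1) r : ℚ) * hh1 +
        (Nat.choose (n+1) (r+1) : ℚ) * hh2
    · refine ⟨(Nat.choose (n-1) (r-1) * Nat.choose (n+1) r : ℤ) -
        (Nat.choose (n-1) (r-2) * Nat.choose (n+1) (r+1) : ℤ), ?_⟩
      field_simp
      push_cast
      linear_combination hkey - (Nat.choose (n+1) r : ℚ) * hh1 +
        (Nat.choose (n+1) (r+1) : ℚ) * hh2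
end

section
/- For integers n ≥ 1 and 1 ≤ k ≤ n-1, the identity C(n, k-1)*C(n, k+1) = (n/2) * ( C(n-1, k-1)*C(n-1, k) - C(n-1, k-2)*C(n-1, k+1) ) holds. -/
lemma zchoose_natCast (a b : ℕ) : zchoose a b = (a.choose b : ℚ) := by
  unfold zchoose
  split
  · simp
  · rename_i h
    rw [Nat.choose_eq_zero_of_lt (by omega)]
    simp

lemma cast_choose_add (a b : ℕ) : (((a+b).choose a : ℕ) : ℚ) =
    (Nat.factorial (a+b) : ℚ) / (Nat.factorial a * Nat.factorial b) := by
  rw [Nat.cast_choose ℚ (Nat.le_add_right a b), Nat.add_sub_cancel_left]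

theorem binom_product_identity (n k : ℕ) (hn : 1 ≤ n) (hk : 1 ≤ k) (hkn : k ≤ n - 1) :
    zchoose n ((k : ℤ) - 1) * zchoose n ((k : ℤ) + 1) =
      ((n : ℚ) / 2) *
        (zchoose ((n : ℤ) - 1) ((k : ℤ) - 1) * zchoose ((n : ℤ) - 1) k -
          zchoose ((n : ℤ) - 1) ((k : ℤ) - 2) * zchoose ((n : ℤ) - 1) ((k : ℤ) + 1)) := by
  obtain ⟨m, rfl⟩ : ∃ m, k = m + 1 := ⟨k - 1, by omega⟩
  obtain ⟨s, rfl⟩ : ∃ s, n = m + s + 2 := ⟨n - m - 2, by omega⟩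
  have h1 : zchoose (↑(m+s+2)) ((↑(m+1):ℤ) - 1) = ((m+s+2).choose m : ℚ) := by
    rw [show ((↑(m+1):ℤ) - 1) = ((m:ℕ):ℤ) by push_cast; ring, zchoose_natCast]
  have h2 : zchoose (↑(m+s+2)) ((↑(m+1):ℤ) + 1) = ((m+s+2).choose (m+2) : ℚ) := by
    rw [show ((↑(m+1):ℤ) + 1) = (((m+2):ℕ):ℤ) by push_cast; ring, zchoose_natCast]
  have h3 : zchoose ((↑(m+s+2):ℤ) - 1) ((↑(m+1):ℤ) - 1) = ((m+s+1).choose m : ℚ) := by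
    rw [show ((↑(m+s+2):ℤ) - 1) = (((m+s+1):ℕ):ℤ) by push_cast; ring,
        show ((↑(m+1):ℤ) - 1) = ((m:ℕ):ℤ) by push_cast; ring, zchoose_natCast]
  have h4 : zchoose ((↑(m+s+2):ℤ) - 1) (↑(m+1)) = ((m+s+1).choose (m+1) : ℚ) := by
    rw [show ((↑(m+s+2):ℤ) - 1) = (((m+s+1):ℕ):ℤ) by push_cast; ring, zchoose_natCast]
  have h6 : zchoose ((↑(m+s+2):ℤ) - 1) ((↑(m+1):ℤ) + 1) = ((m+s+1).choose (m+2) : ℚ) := by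
    rw [show ((↑(m+s+2):ℤ) - 1) = (((m+s+1):ℕ):ℤ) by push_cast; ring,
        show ((↑(m+1):ℤ) + 1) = (((m+2):ℕ):ℤ) by push_cast; ring, zchoose_natCast]
  rw [h1, h2, h3, h4, h6]
  have fne : ∀ a : ℕ, ((a.factorial : ℕ) : ℚ) ≠ 0 := fun a => by
    exact_mod_cast (Nat.factorial_pos a).ne'
  rcases Nat.eq_zero_or_pos m with hm | hm
  · subst hm
    have h5 : zchoose ((((0:ℕ)+s+2:ℕ):ℤ) - 1) (((((0:ℕ)+1:ℕ)):ℤ) - 2) = 0 := by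
      unfold zchoose
      rw [if_neg]; omega
    rw [h5]
    have c1 : (((0+s+2).choose (0+2) : ℕ) : ℚ)
        = ((2+s).factorial : ℚ) / ((2:ℕ).factorial * s.factorial) := by
      rw [show (0+s+2).choose (0+2) = (2+s).choose 2 by rw [Nat.add_comm]; ring_nf]
      exact cast_choose_add 2 s
    rw [c1]
    simp only [Nat.choose_zero_right, Nat.choose_one_right, Nat.zero_add, Nat.cast_one]
    rw [show (2+s).factorial = (2+s) * ((1+s) * s.factorial) by
      simp [show 2+s = (1+s)+1 by ring, show 1+s = s+1 by ring, Nat.factorial_succ]]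
    push_cast
    field_simp [fne s]
    ring
  · obtain ⟨p, rfl⟩ : ∃ p, m = p + 1 := ⟨m - 1, by omega⟩
    have h5 : zchoose ((↑(p+1+s+2):ℤ) - 1) ((↑(p+1+1):ℤ) - 2) = ((p+1+s+1).choose p : ℚ) := by
      rw [show ((↑(p+1+s+2):ℤ) - 1) = (((p+1+s+1):ℕ):ℤ) by push_cast; ring,
          show ((↑(p+1+1):ℤ) - 2) = ((p:ℕ):ℤ) by push_cast; ring, zchoose_natCast]
    rw [h5]
    have c1 : (((p+1+s+2).choose (p+1) : ℕ) : ℚ)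
        = (((p+1)+(s+2)).factorial : ℚ) / ((p+1).factorial * (s+2).factorial) := by
      rw [show (p+1+s+2).choose (p+1) = ((p+1)+(s+2)).choose (p+1) by ring_nf]
      exact cast_choose_add _ _
    have c2 : (((p+1+s+2).choose (p+1+2) : ℕ) : ℚ)
        = (((p+3)+s).factorial : ℚ) / ((p+3).factorial * s.factorial) := by
      rw [show (p+1+s+2).choose (p+1+2) = ((p+3)+s).choose (p+3) by ring_nf]
      exact cast_choose_add _ _
    have c3 : (((p+1+s+1).choose (p+1) : ℕ) : ℚ)
        = (((p+1)+(s+1)).factorial : ℚ) / ((p+1).factorial * (s+1).factorial) := by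
      rw [show (p+1+s+1).choose (p+1) = ((p+1)+(s+1)).choose (p+1) by ring_nf]
      exact cast_choose_add _ _
    have c4 : (((p+1+s+1).choose (p+1+1) : ℕ) : ℚ)
        = (((p+2)+s).factorial : ℚ) / ((p+2).factorial * s.factorial) := by
      rw [show (p+1+s+1).choose (p+1+1) = ((p+2)+s).choose (p+2) by ring_nf]
      exact cast_choose_add _ _
    have c5 : (((p+1+s+1).choose p : ℕ) : ℚ)
        = ((p+(s+2)).factorial : ℚ) / (p.factorial * (s+2).factorial) := by
      rw [show (p+1+s+1).choose p = (p+(s+2)).choose p by ring_nf]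
      exact cast_choose_add _ _
    rw [c1, c2, c3, c4, c5]
    -- remaining term: ((p+1+s+1).choose (p+1+2) : ℚ); split on s
    rcases Nat.eq_zero_or_pos s with hs | hs
    · subst hs
      rw [show (p+1+0+1).choose (p+1+2) = 0 from Nat.choose_eq_zero_of_lt (by omega)]
      simp only [Nat.cast_zero, mul_zero, sub_zero]
      norm_num
      rw [show (p+1+2) = (p+2)+1 by ring]
      rw [show ((p+2)+1).factorial = ((p+2)+1) * ((p+2).factorial) from Nat.factorial_succ _,
          show (p+2).factorial = (p+2) * ((p+1).factorial) from Nat.factorial_succ _,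
          show (p+1).factorial = (p+1) * (p.factorial) from Nat.factorial_succ _]
      push_cast
      field_simp
      ring
    · obtain ⟨t, rfl⟩ : ∃ t, s = t + 1 := ⟨s - 1, by omega⟩
      have c6 : (((p+1+(t+1)+1).choose (p+1+2) : ℕ) : ℚ)
          = (((p+3)+t).factorial : ℚ) / ((p+3).factorial * t.factorial) := by
        rw [show (p+1+(t+1)+1).choose (p+1+2) = ((p+3)+t).choose (p+3) by ring_nf]
        exact cast_choose_add _ _
      rw [c6]
      have F1 : ((p+1)+(t+1+2)).factorial = (p+t+4) * ((p+t+3).factorial) := by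
        rw [show (p+1)+(t+1+2) = (p+t+3)+1 by ring, Nat.factorial_succ]
      have F2 : ((p+3)+(t+1)).factorial = (p+t+4) * ((p+t+3).factorial) := by
        rw [show (p+3)+(t+1) = (p+t+3)+1 by ring, Nat.factorial_succ]
      have F3 : ((p+1)+(t+1+1)).factorial = (p+t+3).factorial := by ring_nf
      have F4 : ((p+2)+(t+1)).factorial = (p+t+3).factorial := by ring_nf
      have F5 : (p+(t+1+2)).factorial = (p+t+3).factorial := by ring_nf
      have F6 : ((p+3)+t).factorial = (p+t+3).factorial := by ring_nf
      rw [F1, F2, F3, F4, F5, F6]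
      rw [show (p+3).factorial = (p+3)*((p+2)*((p+1)*(p.factorial))) by
            simp [show p+3 = (p+2)+1 by ring, show p+2 = (p+1)+1 by ring, Nat.factorial_succ],
          show (p+2).factorial = (p+2)*((p+1)*(p.factorial)) by
            simp [show p+2 = (p+1)+1 by ring, Nat.factorial_succ],
          show (p+1).factorial = (p+1)*(p.factorial) from Nat.factorial_succ _,
          show (t+1+2).factorial = (t+3)*((t+2)*((t+1)*(t.factorial))) by
            simp [show t+1+2 = (t+2)+1 by ring, show t+2 = (t+1)+1 by ring, Nat.factorial_succ],
          show (t+1+1).factorial = (t+2)*((t+1)*(t.factorial)) by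
            simp [show t+1+1 = (t+1)+1 by ring, Nat.factorial_succ],
          show (t+1).factorial = (t+1)*(t.factorial) from Nat.factorial_succ _]
      push_cast
      have hp := fne p
      have ht := fne t
      have hn := fne (p+t+3)
      push_cast at hp ht hn
      field_simp
      ring
end

section
/- Let the sequence (a_n) of rationals be defined by a_1 = 2 and, for n ≥ 2, the recurrence 2*n*a_n = Σ_{k=1}^{n-1} C(n, k-1)*C(n, k+1)*a_k*a_{n-k}. Then a_n > 0 for all n ≥ 1. -/
theorem a_pos (a : ℕ → ℚ) (h1 : a 1 = 2)
    (hrec : ∀ n : ℕ, 2 ≤ n →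
      2 * (n : ℚ) * a n =
        ∑ k ∈ Finset.Icc 1 (n - 1),
          (n.choose (k - 1) : ℚ) * (n.choose (k + 1)) * a k * a (n - k)) :
    ∀ n : ℕ, 1 ≤ n → 0 < a n := by
  intro n
  induction n using Nat.strong_induction_on with
  | _ n ih =>
    intro hn
    rcases eq_or_lt_of_le hn with h | h
    · rw [← h, h1]; norm_num
    · have hn2 : 2 ≤ n := h
      have hsum := hrec n hn2
      have hpos : 0 < ∑ k ∈ Finset.Icc 1 (n - 1),
          (n.choose (k - 1) : ℚ) * (n.choose (k + 1)) * a k * a (n - k) := by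
        apply Finset.sum_pos
        · intro k hk
          simp only [Finset.mem_Icc] at hk
          obtain ⟨hk1, hk2⟩ := hk
          have hkn : k < n := by omega
          have h1' : 0 < (n.choose (k - 1) : ℚ) := by
            exact_mod_cast Nat.choose_pos (by omega)
          have h2' : 0 < (n.choose (k + 1) : ℚ) := by
            exact_mod_cast Nat.choose_pos (by omega)
          have h3' : 0 < a k := ih k hkn hk1
          have h4' : 0 < a (n - k) := ih (n - k) (by omega) (by omega)
          positivity
        · exact Finset.nonempty_Icc.mpr (by omega)
      have h2n : 0 < 2 * (n : ℚ) := by positivity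
      by_contra hcon
      push_neg at hcon
      have hle : 2 * (n : ℚ) * a n ≤ 0 :=
        mul_nonpos_of_nonneg_of_nonpos (le_of_lt h2n) hcon
      linarith
end

section
/- Let (a_n) be defined by a_1 = 2 and 2*n*a_n = Σ_{k=1}^{n-1} C(n, k-1)*C(n, k+1)*a_k*a_{n-k} for n ≥ 2. Then for all n ≥ 2, 4*a_n = Σ_{k=1}^{n-1} C(n-1, k-1)*C(n-1, k)*a_k*a_{n-k} - Σ_{k=2}^{n-2} C(n-1, k-2)*C(n-1, k+1)*a_k*a_{n-k}. -/
open Nat in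
lemma key_choose_identity (j l : ℕ) :
    ((j+l+4 : ℕ) : ℚ) * ((j+l+3).choose (j+1) : ℚ) * ((j+l+3).choose (j+2) : ℚ)
      - 2 * ((j+l+4).choose (j+1) : ℚ) * ((j+l+4).choose (j+3) : ℚ)
      = ((j+l+4 : ℕ) : ℚ) * ((j+l+3).choose j : ℚ) * ((j+l+3).choose (j+3) : ℚ) := by
  have cc : ∀ m k d : ℕ, m - k = d → k ≤ m → (m.choose k : ℚ) = (m)! / ((k)! * (d)!) := by
    intro m k d hd hk; rw [Nat.cast_choose ℚ hk, hd]
  rw [cc (j+l+3) (j+1) (l+2) (by omega) (by omega),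
      cc (j+l+3) (j+2) (l+1) (by omega) (by omega),
      cc (j+l+3) j (l+3) (by omega) (by omega),
      cc (j+l+3) (j+3) l (by omega) (by omega),
      cc (j+l+4) (j+1) (l+3) (by omega) (by omega),
      cc (j+l+4) (j+3) (l+1) (by omega) (by omega)]
  have fj1 : ((j+1)! : ℚ) = ((j:ℚ)+1) * (j)! := by rw [Nat.factorial_succ]; push_cast; ring
  have fj2 : ((j+2)! : ℚ) = ((j:ℚ)+2) * ((j:ℚ)+1) * (j)! := by
    rw [show j+2 = (j+1)+1 from rfl, Nat.factorial_succ]; push_cast; rw [fj1]; ring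
  have fj3 : ((j+3)! : ℚ) = ((j:ℚ)+3) * (((j:ℚ)+2) * ((j:ℚ)+1)) * (j)! := by
    rw [show j+3 = (j+2)+1 from rfl, Nat.factorial_succ]; push_cast; rw [fj2]; ring
  have fl1 : ((l+1)! : ℚ) = ((l:ℚ)+1) * (l)! := by rw [Nat.factorial_succ]; push_cast; ring
  have fl2 : ((l+2)! : ℚ) = ((l:ℚ)+2) * ((l:ℚ)+1) * (l)! := by
    rw [show l+2 = (l+1)+1 from rfl, Nat.factorial_succ]; push_cast; rw [fl1]; ring
  have fl3 : ((l+3)! : ℚ) = ((l:ℚ)+3) * (((l:ℚ)+2) * ((l:ℚ)+1)) * (l)! := by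
    rw [show l+3 = (l+2)+1 from rfl, Nat.factorial_succ]; push_cast; rw [fl2]; ring
  have fn : ((j+l+4)! : ℚ) = ((j:ℚ)+(l:ℚ)+4) * (j+l+3)! := by
    rw [show j+l+4 = (j+l+3)+1 from rfl, Nat.factorial_succ]; push_cast; ring
  rw [fn, fj1, fj2, fj3, fl1, fl2, fl3]
  push_cast
  obtain ⟨F, hF⟩ : ∃ x : ℚ, ((j+l+3)! : ℚ) = x := ⟨_, rfl⟩
  obtain ⟨J, hJ⟩ : ∃ x : ℚ, ((j)! : ℚ) = x := ⟨_, rfl⟩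
  obtain ⟨L, hL⟩ : ∃ x : ℚ, ((l)! : ℚ) = x := ⟨_, rfl⟩
  obtain ⟨x, hx⟩ : ∃ x : ℚ, (j:ℚ) = x := ⟨_, rfl⟩
  obtain ⟨y, hy⟩ : ∃ y : ℚ, (l:ℚ) = y := ⟨_, rfl⟩
  have hJ0 : J ≠ 0 := by rw [← hJ]; positivity
  have hL0 : L ≠ 0 := by rw [← hL]; positivity
  have hx0 : 0 ≤ x := by rw [← hx]; positivity
  have hy0 : 0 ≤ y := by rw [← hy]; positivity
  rw [hF, hJ, hL, hx, hy]
  have d1 : x + 1 ≠ 0 := by positivity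
  have d2 : x + 2 ≠ 0 := by positivity
  have d3 : x + 3 ≠ 0 := by positivity
  have e1 : y + 1 ≠ 0 := by positivity
  have e2 : y + 2 ≠ 0 := by positivity
  have e3 : y + 3 ≠ 0 := by positivity
  field_simp
  ring

theorem a_second_recurrence (a : ℕ → ℚ) (h1 : a 1 = 2)
    (hrec : ∀ n : ℕ, 2 ≤ n →
      2 * (n : ℚ) * a n =
        ∑ k ∈ Finset.Icc 1 (n - 1),
          (n.choose (k - 1) : ℚ) * (n.choose (k + 1)) * a k * a (n - k)) :
    ∀ n : ℕ, 2 ≤ n →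
      4 * a n =
        (∑ k ∈ Finset.Icc 1 (n - 1),
          ((n - 1).choose (k - 1) : ℚ) * ((n - 1).choose k) * a k * a (n - k)) -
        ∑ k ∈ Finset.Icc 2 (n - 2),
          ((n - 1).choose (k - 2) : ℚ) * ((n - 1).choose (k + 1)) * a k * a (n - k) := by
  intro n hn
  obtain ⟨m, rfl⟩ : ∃ m, n = m + 2 := ⟨n - 2, by omega⟩
  have hq := hrec (m+2) (by omega)
  have hn0 : ((m+2 : ℕ) : ℚ) ≠ 0 := by positivity
  have hsub : Finset.Icc 2 (m+2-2) ⊆ Finset.Icc 1 (m+2-1) := by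
    intro x hx; simp only [Finset.mem_Icc] at *; omega
  have hc2 : (((m+2).choose 2 : ℕ) : ℚ) * 2 = ((m:ℚ)+2) * ((m:ℚ)+1) := by
    have hdvd : 2 ∣ (m+2) * (m+1) := by
      rw [mul_comm]; exact (Nat.even_mul_succ_self (m+1)).two_dvd
    have h : (m+2).choose 2 * 2 = (m+2) * (m+1) := by
      rw [Nat.choose_two_right, show m+2-1 = m+1 from rfl, Nat.div_mul_cancel hdvd]
    have h' := congrArg (fun x : ℕ => (x : ℚ)) h
    push_cast at h' ⊢
    linarith
  have hout : ∀ x ∈ Finset.Icc 1 (m+2-1), x ∉ Finset.Icc 2 (m+2-2) →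
      ((m+2:ℕ):ℚ) * (((m+2-1).choose (x-1) : ℚ) * ((m+2-1).choose x) * a x * a (m+2-x))
        - 2 * (((m+2).choose (x-1) : ℚ) * ((m+2).choose (x+1)) * a x * a (m+2-x)) = 0 := by
    intro x hx hx'
    simp only [Finset.mem_Icc] at hx hx'
    have hx1 : x = 1 ∨ x = m + 1 := by omega
    rcases hx1 with rfl | rfl
    · simp only [show m+2-1 = m+1 from rfl, Nat.sub_self, Nat.choose_zero_right,
        Nat.choose_one_right, h1, Nat.cast_one]
      push_cast
      linear_combination (-2 * a (m+1)) * hc2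
    · have e1 : (m+1).choose (m+1-1) = m+1 := by
        rw [show m+1-1 = m from rfl]; exact Nat.choose_succ_self_right m
      have e2 : (m+2).choose (m+1-1) = (m+2).choose 2 := Nat.choose_symm (n := m+2) (k := 2) (by omega)
      simp only [show m+2-1 = m+1 from rfl, show m+2-(m+1) = 1 from by omega,
        show m+1+1 = m+2 from rfl, e1, e2, Nat.choose_self, h1, Nat.cast_one]
      push_cast
      linear_combination (-2 * a (m+1)) * hc2
  have hsum : ∑ k ∈ Finset.Icc 1 (m+2-1),
      (((m+2:ℕ):ℚ) * (((m+2-1).choose (k-1) : ℚ) * ((m+2-1).choose k) * a k * a (m+2-k))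
        - 2 * (((m+2).choose (k-1) : ℚ) * ((m+2).choose (k+1)) * a k * a (m+2-k)))
      = ∑ k ∈ Finset.Icc 2 (m+2-2),
        ((m+2:ℕ):ℚ) * (((m+2-1).choose (k-2) : ℚ) * ((m+2-1).choose (k+1)) * a k * a (m+2-k)) := by
    rw [← Finset.sum_subset hsub hout]
    apply Finset.sum_congr rfl
    intro k hk
    simp only [Finset.mem_Icc] at hk
    obtain ⟨j, rfl⟩ : ∃ j, k = j + 2 := ⟨k - 2, by omega⟩
    obtain ⟨l, rfl⟩ : ∃ l, m = j + l + 2 := ⟨m - j - 2, by omega⟩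
    rw [show j+l+2+2-1 = j+l+3 from by omega, show j+2-1 = j+1 from by omega,
      show j+2-2 = j from by omega, show j+l+2+2-(j+2) = l+2 from by omega,
      show j+l+2+2 = j+l+4 from by omega, show j+2+1 = j+3 from by omega]
    linear_combination (a (j+2) * a (l+2)) * key_choose_identity j l
  have H : ((m+2:ℕ):ℚ) * (∑ k ∈ Finset.Icc 1 (m+2-1),
        ((m+2-1).choose (k-1) : ℚ) * ((m+2-1).choose k) * a k * a (m+2-k))
      - 2 * (∑ k ∈ Finset.Icc 1 (m+2-1),
        ((m+2).choose (k-1) : ℚ) * ((m+2).choose (k+1)) * a k * a (m+2-k))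
      = ((m+2:ℕ):ℚ) * ∑ k ∈ Finset.Icc 2 (m+2-2),
        ((m+2-1).choose (k-2) : ℚ) * ((m+2-1).choose (k+1)) * a k * a (m+2-k) := by
    rw [Finset.mul_sum, Finset.mul_sum, Finset.mul_sum, ← Finset.sum_sub_distrib]
    exact hsum
  refine mul_left_cancel₀ hn0 ?_
  push_cast at hq H ⊢
  linear_combination 2 * hq - H
end

section
/- Let (a_n) be defined by a_1 = 2 and 2*n*a_n = Σ_{k=1}^{n-1} C(n, k-1)*C(n, k+1)*a_k*a_{n-k} for n ≥ 2. Then every a_n is a nonnegative integer, and a_n is even whenever n is odd. -/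
open PowerSeries Finset

noncomputable def Wps : ℚ⟦X⟧ := PowerSeries.mk fun m => 1 / (m.factorial * (m+1).factorial)
theorem hW : X * d⁄dX ℚ (d⁄dX ℚ Wps) + 2 * d⁄dX ℚ Wps = Wps := by
  have h2 : (2 : ℚ⟦X⟧) = C 2 := by rw [map_ofNat]
  ext n
  have hfac : ∀ m : ℕ, (m.factorial : ℚ) ≠ 0 := fun m => by exact_mod_cast m.factorial_ne_zero
  rcases n with _ | m
  · rw [map_add, coeff_zero_X_mul, h2, coeff_C_mul, PowerSeries.coeff_derivative]
    simp only [Wps, coeff_mk]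
    norm_num [Nat.factorial]
  · rw [map_add, PowerSeries.coeff_succ_X_mul, h2, coeff_C_mul,
      PowerSeries.coeff_derivative, PowerSeries.coeff_derivative]
    simp only [Wps, coeff_mk]
    have e1 : ((m+1)+1).factorial = (m+2)*(m+1).factorial := Nat.factorial_succ _
    have e2 : ((m+1+1)+1).factorial = (m+3)*(m+1+1).factorial := Nat.factorial_succ _
    have e3 : (m+1).factorial = (m+1)*m.factorial := Nat.factorial_succ _
    rw [e2, e1, e3]
    have := hfac m; have := hfac (m+1+1)
    field_simp
    push_cast
    ring

noncomputable def vps (a : ℕ → ℚ) : ℚ⟦X⟧ :=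
  PowerSeries.mk fun j => if j = 0 then 0 else (-1)^j * a j / ((j-1).factorial * (j+1).factorial)

lemma cast_choose_sub (n k r : ℕ) (h : k ≤ n) (hr : n - k = r) :
    ((n.choose k : ℚ)) = n.factorial / (k.factorial * r.factorial) := by
  subst hr; exact Nat.cast_choose ℚ h

theorem hV (a : ℕ → ℚ) (h1 : a 1 = 2)
    (hrec : ∀ n : ℕ, 2 ≤ n →
      2 * (n : ℚ) * a n =
        ∑ k ∈ Finset.Icc 1 (n - 1),
          (n.choose (k - 1) : ℚ) * (n.choose (k + 1)) * a k * a (n - k)) :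
    2 * vps a + 2 * (X * d⁄dX ℚ (vps a)) = vps a * vps a - 4 * X := by
  have h2 : (2 : ℚ⟦X⟧) = C 2 := by rw [map_ofNat]
  have h4 : (4 : ℚ⟦X⟧) = C 4 := by rw [map_ofNat]
  have hfac : ∀ m : ℕ, (m.factorial : ℚ) ≠ 0 := fun m => by exact_mod_cast m.factorial_ne_zero
  have key : ∀ i e : ℕ, (coeff (i+1) (vps a)) * coeff (e+1) (vps a)
      = (-1)^(i+e+2) / (((i+e+2).factorial : ℚ) * (i+e+2).factorial) *
        ((((i+e+2).choose i : ℕ) : ℚ) * (((i+e+2).choose (i+2) : ℕ) : ℚ) * a (i+1) * a (e+1)) := by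
    intro i e
    simp only [vps, coeff_mk, if_neg (Nat.succ_ne_zero _), Nat.add_sub_cancel]
    rw [cast_choose_sub _ _ (e+2) (by omega) (by omega),
        cast_choose_sub _ _ e (by omega) (by omega)]
    have := hfac i; have := hfac e; have := hfac (i+2); have := hfac (e+2)
    have := hfac (i+e+2)
    field_simp
    ring
  ext n
  rcases n with _ | n
  · simp [vps]
  rw [map_add, map_sub, h2, h4, coeff_C_mul, coeff_C_mul, coeff_C_mul, coeff_X,
    PowerSeries.coeff_succ_X_mul, PowerSeries.coeff_derivative, coeff_mul,
    Finset.Nat.sum_antidiagonal_eq_sum_range_succ_mk]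
  rcases n with _ | m
  · -- n = 1
    norm_num [Finset.sum_range_succ, vps, h1, Nat.factorial]
  · -- n = m+2
    have hif : (if m + 1 + 1 = 1 then (1:ℚ) else 0) = 0 := by norm_num
    rw [hif]
    have hmm : m + 1 + 1 = m + 2 := rfl
    rw [hmm]
    set n := m + 2 with hn
    have hsum : ∑ k ∈ Finset.range (n+1), (coeff (k, n - k).1 (vps a)) * coeff (k, n - k).2 (vps a)
        = ∑ k ∈ Finset.Icc 1 (n-1), (coeff k (vps a)) * coeff (n-k) (vps a) := by
      rw [eq_comm]
      apply Finset.sum_subset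
      · intro k hk; simp only [Finset.mem_Icc] at hk; simp only [Finset.mem_range]; omega
      · intro k hk hk'
        simp only [Finset.mem_range, Finset.mem_Icc] at hk hk'
        have : k = 0 ∨ k = n := by omega
        rcases this with h | h
        · subst h; simp [vps]
        · subst h; simp [vps]
    have hterm : ∀ k ∈ Finset.Icc 1 (n-1),
        (coeff k (vps a)) * coeff (n-k) (vps a)
        = (-1)^n / ((n.factorial : ℚ) * n.factorial) *
          ((n.choose (k - 1) : ℚ) * (n.choose (k + 1)) * a k * a (n - k)) := by
      intro k hk
      simp only [Finset.mem_Icc] at hk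
      obtain ⟨i, rfl⟩ : ∃ i, k = i + 1 := ⟨k - 1, by omega⟩
      obtain ⟨e, he⟩ : ∃ e, n - (i+1) = e + 1 := ⟨n - i - 2, by omega⟩
      have hne : n = i + e + 2 := by omega
      rw [he, show i + 1 - 1 = i from by omega, show i + 1 + 1 = i + 2 from rfl, hne]
      exact key i e
    rw [hsum, Finset.sum_congr rfl hterm, ← Finset.mul_sum, ← hrec n (by omega)]
    -- pure factorial identity
    simp only [vps, coeff_mk, if_neg (show n ≠ 0 by omega)]
    rw [show n - 1 = m + 1 from by omega, show n + 1 = m + 3 from rfl]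
    have f1 : (m+1).factorial = (m+1) * m.factorial := Nat.factorial_succ _
    have f2 : (m+2).factorial = (m+2) * (m+1).factorial := Nat.factorial_succ _
    have f3 : (m+3).factorial = (m+3) * (m+2).factorial := Nat.factorial_succ _
    have hnm : (n : ℚ) = (m : ℚ) + 2 := by rw [hn]; push_cast; ring
    have hnf : n.factorial = (m+2).factorial := by rw [hn]
    rw [hnf, f3, f2, f1, hnm]
    have := hfac m
    field_simp
    push_cast
    ring

theorem Gzero (V G : ℚ⟦X⟧) (hV0 : coeff 0 V = 0)
    (hG0 : coeff 0 G = 0)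
    (hG1 : 2 * (X * d⁄dX ℚ G) = (V - 2) * G) : G = 0 := by
  ext n
  rw [map_zero]
  induction n using Nat.strong_induction_on with
  | _ n ih =>
  rcases n with _ | n
  · exact hG0
  · have h := congrArg (coeff (n+1)) hG1
    nth_rewrite 1 [show (2 : ℚ⟦X⟧) = C 2 from by rw [map_ofNat]] at h
    rw [coeff_C_mul,
      PowerSeries.coeff_succ_X_mul, PowerSeries.coeff_derivative, coeff_mul,
      Finset.Nat.sum_antidiagonal_eq_sum_range_succ_mk] at h
    have hsum : ∑ k ∈ Finset.range (n+2), (coeff (k, n+1-k).1 (V - 2)) * coeff (k, n+1-k).2 G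
        = (coeff 0 (V - 2)) * coeff (n+1) G := by
      apply Finset.sum_eq_single_of_mem 0 (by simp)
      intro k hk hkne
      have : coeff (n+1-k) G = 0 := ih _ (by simp at hk; omega)
      simp [this]
    rw [hsum, map_sub, hV0] at h
    have h2 : coeff 0 (2 : ℚ⟦X⟧) = 2 := by rw [coeff_zero_eq_constantCoeff, map_ofNat]
    rw [h2] at h
    have : ((2:ℚ) * ((n:ℚ)+1) + 2) * coeff (n+1) G = 0 := by
      push_cast at h ⊢
      linarith
    rcases mul_eq_zero.mp this with h' | h'
    · exfalso
      have : (0:ℚ) < 2 * ((n:ℚ)+1) + 2 := by positivity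
      linarith
    · exact h'

def Dint (n j : ℕ) : ℤ :=
  ((n-1).choose (j-1) * (n+1).choose j : ℤ) -
    (if 2 ≤ j then ((n-1).choose (j-2) * (n+1).choose (j+1) : ℤ) else 0)

lemma fac_ne (m : ℕ) : (m.factorial : ℚ) ≠ 0 := by exact_mod_cast m.factorial_ne_zero

theorem Dcast (n j : ℕ) (hj : 1 ≤ j) (hjn : j ≤ n) :
    (Dint n j : ℚ) = 2 * (n-1).factorial * (n+1).factorial /
      ((j-1).factorial * (j+1).factorial * (n-j).factorial * (n-j+1).factorial) := by
  rcases Nat.lt_or_ge j 2 with hj2 | hj2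
  · -- j = 1
    have hj1 : j = 1 := by omega
    subst hj1
    obtain ⟨d, rfl⟩ : ∃ d, n = d + 1 := ⟨n - 1, by omega⟩
    rw [Dint, if_neg (by omega)]
    rw [show d + 1 - 1 = d from by omega, show (1:ℕ) - 1 = 0 from rfl,
      show d + 1 + 1 = d + 2 from rfl,      show (1:ℕ) + 1 = 2 from rfl]
    rw [Nat.choose_zero_right, Nat.choose_one_right]
    rw [show (d+2).factorial = (d+2) * (d+1).factorial from Nat.factorial_succ _]
    push_cast
    rw [show (Nat.factorial 0 : ℚ) = 1 from by norm_num,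
      show (Nat.factorial 2 : ℚ) = 2 from by norm_num]
    have := fac_ne d; have := fac_ne (d+1)
    field_simp
    ring
  · obtain ⟨i, rfl⟩ : ∃ i, j = i + 2 := ⟨j - 2, by omega⟩
    obtain ⟨d, rfl⟩ : ∃ d, n = i + d + 2 := ⟨n - (i+2), by omega⟩
    rw [Dint, if_pos (by omega)]
    rw [show i + d + 2 - 1 = i + d + 1 from by omega,
      show i + 2 - 1 = i + 1 from by omega,
      show i + d + 2 + 1 = i + d + 3 from rfl,
      show i + 2 - 2 = i from by omega,
      show i + 2 + 1 = i + 3 from rfl,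
      show i + d + 2 - (i + 2) = d from by omega]
    push_cast
    rw [cast_choose_sub (i+d+1) (i+1) d (by omega) (by omega),
      cast_choose_sub (i+d+3) (i+2) (d+1) (by omega) (by omega),
      cast_choose_sub (i+d+1) i (d+1) (by omega) (by omega),
      cast_choose_sub (i+d+3) (i+3) d (by omega) (by omega)]
    rw [show (i+3).factorial = (i+3) * (i+2).factorial from Nat.factorial_succ _,
      show (i+2).factorial = (i+2) * (i+1).factorial from Nat.factorial_succ _,
      show (i+1).factorial = (i+1) * i.factorial from Nat.factorial_succ _,
      show (d+1).factorial = (d+1) * d.factorial from Nat.factorial_succ _]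
    have := fac_ne i; have := fac_ne d; have := fac_ne (i+d+1); have := fac_ne (i+d+3)
    push_cast
    field_simp
    ring

theorem LRkey (a : ℕ → ℚ) (hG : vps a * Wps + 2 * (X * d⁄dX ℚ Wps) = 0) :
    ∀ n : ℕ, 1 ≤ n → ∑ j ∈ Finset.Icc 1 n, (-1:ℚ)^j * (Dint n j : ℚ) * a j = -4 := by
  intro n hn
  obtain ⟨t, rfl⟩ : ∃ t, n = t + 1 := ⟨n - 1, by omega⟩
  set n := t + 1 with hn'
  have h := congrArg (coeff n) hG
  rw [map_add, map_zero, coeff_mul, Finset.Nat.sum_antidiagonal_eq_sum_range_succ_mk,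
    show (2 : ℚ⟦X⟧) = C 2 from by rw [map_ofNat], coeff_C_mul,
    PowerSeries.coeff_succ_X_mul, PowerSeries.coeff_derivative] at h
  -- h : ∑ k in range (n+1), v_k * w_{n-k} + 2 * (coeff n Wps * (t+1)) = 0
  have hIcc : ∑ k ∈ Finset.range (n+1), (coeff (k, n - k).1 (vps a)) * coeff (k, n - k).2 Wps
      = ∑ j ∈ Finset.Icc 1 n, (coeff j (vps a)) * coeff (n-j) Wps := by
    rw [eq_comm]
    apply Finset.sum_subset
    · intro k hk; simp only [Finset.mem_Icc] at hk; simp only [Finset.mem_range]; omega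
    · intro k hk hk'
      simp only [Finset.mem_range, Finset.mem_Icc] at hk hk'
      have : k = 0 := by omega
      subst this; simp [vps]
  rw [hIcc] at h
  have hterm : ∀ j ∈ Finset.Icc 1 n, (-1:ℚ)^j * (Dint n j : ℚ) * a j
      = (2 * ((n-1).factorial : ℚ) * (n+1).factorial) * ((coeff j (vps a)) * coeff (n-j) Wps) := by
    intro j hj
    simp only [Finset.mem_Icc] at hj
    rw [Dcast n j hj.1 hj.2]
    simp only [vps, Wps, coeff_mk, if_neg (show j ≠ 0 by omega)]
    have := fac_ne (j-1); have := fac_ne (j+1); have := fac_ne (n-j); have := fac_ne (n-j+1)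
    field_simp
  rw [Finset.sum_congr rfl hterm, ← Finset.mul_sum]
  have hw : coeff n Wps = 1 / ((n.factorial : ℚ) * (n+1).factorial) := by
    simp [Wps]
  have hsv : ∑ j ∈ Finset.Icc 1 n, (coeff j (vps a)) * coeff (n-j) Wps
      = -(2 * (coeff n Wps * ((t:ℚ)+1))) := by linarith
  rw [hsv, hw]
  rw [show n.factorial = (t+1) * t.factorial from Nat.factorial_succ _,
    show n - 1 = t from by omega]
  have := fac_ne t; have := fac_ne (n+1)
  push_cast
  field_simp
  ring

lemma lucas2 (n k : ℕ) : n.choose k ≡ (n % 2).choose (k % 2) * (n / 2).choose (k / 2) [MOD 2] := by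
  haveI : Fact (Nat.Prime 2) := ⟨Nat.prime_two⟩
  exact Choose.choose_modEq_choose_mod_mul_choose_div_nat

lemma lucas2' (n k n2 k2 n1 k1 : ℕ) (h1 : n % 2 = n1) (h2 : k % 2 = k1)
    (h3 : n / 2 = n2) (h4 : k / 2 = k2) :
    n.choose k ≡ n1.choose k1 * n2.choose k2 [MOD 2] := by
  subst h1; subst h2; subst h3; subst h4; exact lucas2 n k

theorem Deven (n j : ℕ) (hj2 : 2 ≤ j) (hje : Even j) (hjn : j + 1 ≤ n) : Even (Dint n j) := by
  have hj : j % 2 = 0 := Nat.even_iff.mp hje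
  obtain ⟨J, rfl⟩ : ∃ J, j = 2*J + 2 := ⟨j/2 - 1, by omega⟩
  rw [Dint, if_pos hj2]
  have hA : Even ((n-1).choose (2*J+2-1) * (n+1).choose (2*J+2)) ↔
      Even ((n-1).choose (2*J+2-2) * (n+1).choose (2*J+2+1)) := by
    rw [Nat.even_iff, Nat.even_iff]
    rcases Nat.even_or_odd n with he | ho
    · -- n even, n = 2N, N ≥ 2
      have hn2 : n % 2 = 0 := Nat.even_iff.mp he
      have h1 := lucas2' (n-1) (2*J+2-1) (n/2 - 1) J 1 1 (by omega) (by omega) (by omega) (by omega)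
      have h2 := lucas2' (n+1) (2*J+2) (n/2) (J+1) 1 0 (by omega) (by omega) (by omega) (by omega)
      have h3 := lucas2' (n-1) (2*J+2-2) (n/2 - 1) J 1 0 (by omega) (by omega) (by omega) (by omega)
      have h4 := lucas2' (n+1) (2*J+2+1) (n/2) (J+1) 1 1 (by omega) (by omega) (by omega) (by omega)
      have hA1 := (h1.mul h2)
      have hA2 := (h3.mul h4)
      unfold Nat.ModEq at hA1 hA2
      rw [hA1, hA2]
      simp [Nat.choose_one_right, Nat.choose_zero_right]
    · -- n odd
      have hn2 : n % 2 = 1 := Nat.odd_iff.mp ho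
      have h1 := lucas2' (n-1) (2*J+2-1) ((n-1)/2) J 0 1 (by omega) (by omega) (by omega) (by omega)
      have h4 := lucas2' (n+1) (2*J+2+1) ((n+1)/2) (J+1) 0 1 (by omega) (by omega) (by omega) (by omega)
      have hA1 := (h1.mul (Nat.ModEq.refl ((n+1).choose (2*J+2))))
      have hA2 := ((Nat.ModEq.refl ((n-1).choose (2*J+2-2))).mul h4)
      unfold Nat.ModEq at hA1 hA2
      rw [hA1, hA2]
      simp
  have : Even (((n-1).choose (2*J+2-1) * (n+1).choose (2*J+2) : ℕ) : ℤ) ↔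
      Even (((n-1).choose (2*J+2-2) * (n+1).choose (2*J+2+1) : ℕ) : ℤ) := by
    rw [Int.even_coe_nat, Int.even_coe_nat]; exact hA
  rw [Int.even_sub]
  push_cast at this ⊢
  exact this

lemma Dnn (n : ℕ) (hn : 2 ≤ n) : Dint n n = 2 := by
  obtain ⟨m, rfl⟩ : ∃ m, n = m + 2 := ⟨n - 2, by omega⟩
  rw [Dint, if_pos (by omega)]
  rw [show m + 2 - 1 = m + 1 from by omega, show m + 2 - 2 = m from by omega,
    show m + 2 + 1 = m + 3 from rfl]
  rw [Nat.choose_self]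
  rw [show (m+3).choose (m+2) = m + 3 from by
      rw [show m + 3 = (m+2) + 1 from rfl, Nat.choose_succ_self_right],
    show (m+1).choose m = m + 1 from Nat.choose_succ_self_right _,
    show (m+3).choose (m+3) = 1 from Nat.choose_self _]
  push_cast
  ring

theorem main_thm (a : ℕ → ℚ) (h1 : a 1 = 2)
    (hrec : ∀ n : ℕ, 2 ≤ n →
      2 * (n : ℚ) * a n =
        ∑ k ∈ Finset.Icc 1 (n - 1),
          (n.choose (k - 1) : ℚ) * (n.choose (k + 1)) * a k * a (n - k))
    (hLR : ∀ n : ℕ, 1 ≤ n → ∑ j ∈ Finset.Icc 1 n, (-1:ℚ)^j * (Dint n j : ℚ) * a j = -4) :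
    ∀ n : ℕ, 1 ≤ n →
      (∃ m : ℕ, a n = m) ∧ (Odd n → ∃ m : ℤ, a n = 2 * m) := by
  have main : ∀ n : ℕ, 1 ≤ n → ∃ m : ℕ, a n = m ∧ (Odd n → Even m) := by
    intro n
    induction n using Nat.strong_induction_on with
    | _ n ih =>
    intro hn
    rcases eq_or_lt_of_le hn with h | h
    · refine ⟨2, by rw [← h]; rw [h1]; norm_num, fun _ => even_two⟩
    · -- n ≥ 2
      have hn2 : 2 ≤ n := h
      set M : ℕ → ℤ := fun j => (a j).num with hMdef
      have hM : ∀ j, 1 ≤ j → j ≤ n - 1 → (M j : ℚ) = a j ∧ 0 ≤ M j ∧ (Odd j → Even (M j)) := by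
        intro j hj1 hj2
        obtain ⟨m, hm, hpar⟩ := ih j (by omega) hj1
        have hnum : M j = (m : ℤ) := by rw [hMdef]; simp [hm]
        refine ⟨by rw [hnum, hm]; norm_cast, by rw [hnum]; positivity, fun ho => ?_⟩
        rw [hnum]
        exact_mod_cast (hpar ho)
      -- linear recurrence
      have hL := hLR n (by omega)
      rw [show Finset.Icc 1 n = insert n (Finset.Icc 1 (n-1)) from
          Finset.ext fun x => by simp only [Finset.mem_Icc, Finset.mem_insert]; omega,
        Finset.sum_insert (by simp only [Finset.mem_Icc]; omega), Dnn n hn2] at hL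
      -- integer sum
      set Sint : ℤ := ∑ j ∈ Finset.Icc 1 (n-1), (-1)^j * Dint n j * M j with hSdef
      have hScast : ((Sint : ℤ) : ℚ) = ∑ j ∈ Finset.Icc 1 (n-1), (-1:ℚ)^j * (Dint n j : ℚ) * a j := by
        rw [hSdef]
        push_cast
        refine Finset.sum_congr rfl fun j hj => ?_
        simp only [Finset.mem_Icc] at hj
        rw [(hM j hj.1 hj.2).1]
      have hSev : 2 ∣ Sint := by
        rw [hSdef]
        refine Finset.dvd_sum fun j hj => ?_
        simp only [Finset.mem_Icc] at hj
        rcases Nat.even_or_odd j with hje | hjo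
        · obtain ⟨c, hc⟩ := Deven n j (by rcases hje with ⟨t, ht⟩; omega) hje (by omega)
          exact Dvd.dvd.mul_right (Dvd.dvd.mul_left ⟨c, by omega⟩ _) _
        · obtain ⟨c, hc⟩ := (hM j hj.1 hj.2).2.2 hjo
          exact Dvd.dvd.mul_left ⟨c, by omega⟩ _
      obtain ⟨T, hT⟩ := hSev
      -- solve for a n
      set z : ℤ := (-1)^n * (-2 - T) with hzdef
      have hsgn : ((-1:ℚ))^n * ((-1:ℚ))^n = 1 := by
        rw [← pow_add]; exact Even.neg_one_pow ⟨n, rfl⟩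
      have haz : a n = (z : ℚ) := by
        have hL2 : (-1:ℚ)^n * 2 * a n + ((Sint:ℤ):ℚ) = -4 := by
          rw [hScast]; push_cast at hL ⊢; linarith
        rw [hT] at hL2
        push_cast at hL2 ⊢
        rw [hzdef]
        push_cast
        linear_combination ((-1:ℚ))^n/2 * hL2 - a n * hsgn
      -- nonnegativity
      have hge : 0 ≤ a n := by
        have hr := hrec n hn2
        have hnn : 0 ≤ ∑ k ∈ Finset.Icc 1 (n - 1),
            (n.choose (k - 1) : ℚ) * (n.choose (k + 1)) * a k * a (n - k) := by
          refine Finset.sum_nonneg fun k hk => ?_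
          simp only [Finset.mem_Icc] at hk
          have h1k := hM k hk.1 hk.2
          have h2k := hM (n-k) (by omega) (by omega)
          have ha1 : 0 ≤ a k := by rw [← h1k.1]; exact_mod_cast h1k.2.1
          have ha2 : 0 ≤ a (n-k) := by rw [← h2k.1]; exact_mod_cast h2k.2.1
          positivity
        have hpos : (0:ℚ) < 2 * n := by
          have : (0:ℚ) < n := by exact_mod_cast (by omega : 0 < n)
          linarith
        nlinarith [hr, hnn, hpos]
      have hz0 : 0 ≤ z := by
        have : (0:ℚ) ≤ (z:ℚ) := by rw [← haz]; exact hge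
        exact_mod_cast this
      refine ⟨z.toNat, by rw [haz]; rw [show ((z.toNat : ℕ) : ℚ) = ((z.toNat : ℤ) : ℚ) from by push_cast; ring, Int.toNat_of_nonneg hz0], fun hodd => ?_⟩
      -- parity
      have hZint : (2*(n:ℤ)*z : ℤ) = ∑ k ∈ Finset.Icc 1 (n-1),
          (n.choose (k-1) : ℤ) * (n.choose (k+1)) * M k * M (n-k) := by
        have hq : ((2*(n:ℤ)*z : ℤ) : ℚ) = ((∑ k ∈ Finset.Icc 1 (n-1),
            (n.choose (k-1) : ℤ) * (n.choose (k+1)) * M k * M (n-k) : ℤ) : ℚ) := by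
          push_cast
          rw [← haz]
          rw [hrec n hn2]
          refine Finset.sum_congr rfl fun k hk => ?_
          simp only [Finset.mem_Icc] at hk
          rw [(hM k hk.1 hk.2).1, (hM (n-k) (by omega) (by omega)).1]
        exact_mod_cast hq
      have h4 : ((2*(n:ℤ)*z : ℤ) : ZMod 4) = 0 := by
        rw [hZint]
        push_cast
        refine Finset.sum_involution (fun k _ => n - k) ?_ ?_ ?_ ?_
        · intro k hk
          simp only [Finset.mem_Icc] at hk
          have hsym : ((n.choose (n-k-1) : ℤ) * (n.choose (n-k+1)) * M (n-k) * M (n-(n-k)) : ℤ)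
              = (n.choose (k-1) : ℤ) * (n.choose (k+1)) * M k * M (n-k) := by
            rw [show n - (n-k) = k from by omega,
              show n - k - 1 = n - (k+1) from by omega,
              show n - k + 1 = n - (k-1) from by omega,
              Nat.choose_symm (by omega), Nat.choose_symm (by omega)]
            ring
          have hev : 2 ∣ ((n.choose (k-1) : ℤ) * (n.choose (k+1)) * M k * M (n-k)) := by
            have hnodd : n % 2 = 1 := Nat.odd_iff.mp hodd
            rcases Nat.even_or_odd k with hke | hko
            · obtain ⟨c, hc⟩ := (hM (n-k) (by omega) (by omega)).2.2
                (by rw [Nat.odd_iff]; have := Nat.even_iff.mp hke; omega)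
              exact Dvd.dvd.mul_left ⟨c, by omega⟩ _
            · obtain ⟨c, hc⟩ := (hM k hk.1 hk.2).2.2 hko
              exact Dvd.dvd.mul_right (Dvd.dvd.mul_left ⟨c, by omega⟩ _) _
          obtain ⟨y, hy⟩ := hev
          have : ((n.choose (k-1) : ℤ) * (n.choose (k+1)) * M k * M (n-k) : ℤ) +
              ((n.choose (n-k-1) : ℤ) * (n.choose (n-k+1)) * M (n-k) * M (n-(n-k))) = 4*y := by
            rw [hsym, hy]; ring
          calc ((n.choose (k-1) : ℤ) * (n.choose (k+1)) * M k * M (n-k) : ZMod 4) +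
                ((n.choose (n-k-1) : ℤ) * (n.choose (n-k+1)) * M (n-k) * M (n-(n-k)) : ZMod 4)
              = (((n.choose (k-1) : ℤ) * (n.choose (k+1)) * M k * M (n-k) +
                (n.choose (n-k-1) : ℤ) * (n.choose (n-k+1)) * M (n-k) * M (n-(n-k)) : ℤ) : ZMod 4) := by
                push_cast; ring
            _ = ((4*y : ℤ) : ZMod 4) := by rw [this]
            _ = 0 := by
                rw [ZMod.intCast_zmod_eq_zero_iff_dvd]
                exact ⟨y, by push_cast; ring⟩
        · intro k hk _
          simp only [Finset.mem_Icc] at hk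
          have hnodd : n % 2 = 1 := Nat.odd_iff.mp hodd
          show n - k ≠ k
          omega
        · intro k hk
          simp only [Finset.mem_Icc] at hk ⊢
          show 1 ≤ n - k ∧ n - k ≤ n - 1
          omega
        · intro k hk
          simp only [Finset.mem_Icc] at hk
          show n - (n - k) = k
          omega
      rw [ZMod.intCast_zmod_eq_zero_iff_dvd] at h4
      obtain ⟨c, hc⟩ := h4
      have hnz : (n:ℤ) * z = 2 * c := by
        have : (2:ℤ) * ((n:ℤ)*z) = 2 * (2*c) := by push_cast at hc; linarith
        exact mul_left_cancel₀ two_ne_zero this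
      have hez : Even z := by
        have : Even ((n:ℤ) * z) := ⟨c, by omega⟩
        rcases Int.even_mul.mp this with he | he
        · exfalso
          rw [Int.even_coe_nat] at he
          exact (Nat.not_even_iff_odd.mpr hodd) he
        · exact he
      have : Even (z.toNat) := by
        rcases hez with ⟨t, ht⟩
        exact ⟨t.toNat, by omega⟩
      exact this
  intro n hn
  obtain ⟨m, hm, hpar⟩ := main n hn
  refine ⟨⟨m, hm⟩, fun ho => ?_⟩
  obtain ⟨t, ht⟩ := hpar ho
  exact ⟨t, by rw [hm, ht]; push_cast; ring⟩

theorem G1 (V : ℚ⟦X⟧)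
    (hW : X * d⁄dX ℚ (d⁄dX ℚ Wps) + 2 * d⁄dX ℚ Wps = Wps)
    (hV : 2 * V + 2 * (X * d⁄dX ℚ V) = V * V - 4 * X) :
    2 * (X * d⁄dX ℚ (V * Wps + 2 * (X * d⁄dX ℚ Wps))) = (V - 2) * (V * Wps + 2 * (X * d⁄dX ℚ Wps)) := by
  have h2C : d⁄dX ℚ (2 : ℚ⟦X⟧) = 0 := by
    rw [show (2 : ℚ⟦X⟧) = C 2 from by rw [map_ofNat], PowerSeries.derivative_C]
  have hd : d⁄dX ℚ (V * Wps + 2 * (X * d⁄dX ℚ Wps))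
      = d⁄dX ℚ V * Wps + V * d⁄dX ℚ Wps + 2 * (d⁄dX ℚ Wps + X * d⁄dX ℚ (d⁄dX ℚ Wps)) := by
    rw [map_add, Derivation.leibniz, Derivation.leibniz, Derivation.leibniz,
      PowerSeries.derivative_X, h2C]
    simp only [smul_eq_mul]
    ring
  rw [hd]
  linear_combination Wps * hV + (4 * X) * hW

theorem a_integer_and_parity (a : ℕ → ℚ) (h1 : a 1 = 2)
    (hrec : ∀ n : ℕ, 2 ≤ n →
      2 * (n : ℚ) * a n =
        ∑ k ∈ Finset.Icc 1 (n - 1),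
          (n.choose (k - 1) : ℚ) * (n.choose (k + 1)) * a k * a (n - k)) :
    ∀ n : ℕ, 1 ≤ n →
      (∃ m : ℕ, a n = m) ∧ (Odd n → ∃ m : ℤ, a n = 2 * m) := by
  have hVps := hV a h1 hrec
  have hG1 := G1 (vps a) hW hVps
  have hV0 : PowerSeries.coeff 0 (vps a) = 0 := by simp [vps]
  have hG0 : PowerSeries.coeff 0 (vps a * Wps + 2 * (X * d⁄dX ℚ Wps)) = 0 := by
    rw [map_add, coeff_mul]
    rw [show (2 : ℚ⟦X⟧) = C 2 from by rw [map_ofNat], coeff_C_mul, coeff_zero_X_mul]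
    simp [Finset.Nat.antidiagonal_zero, hV0]
  have hGz : vps a * Wps + 2 * (X * d⁄dX ℚ Wps) = 0 := Gzero (vps a) _ hV0 hG0 hG1
  exact main_thm a h1 hrec (LRkey a hGz)
end

section
/- Let (b_n) be defined by b_1 = 1 and b_n = Σ_{k=1}^{n-1} C(n-1, k)*C(n-1, k-1)*b_k*b_{n-k} for n ≥ 2. Then b_n is odd if and only if n is a power of 2. -/
open Finset

lemma zmod2_sq (x : ZMod 2) : x * x = x := by revert x; decide
lemma zmod2_mul_eq_one (x y : ZMod 2) : x * y = 1 ↔ x = 1 ∧ y = 1 := by revert x y; decide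

lemma choose_parity : ∀ m : ℕ, 1 ≤ m →
    (((2 * m - 1).choose m : ZMod 2) = 1 ↔ ∃ j : ℕ, m = 2 ^ j) := by
  haveI : Fact (Nat.Prime 2) := ⟨Nat.prime_two⟩
  intro m
  induction m using Nat.strong_induction_on with
  | _ m ih =>
  intro hm
  have lucas := (ZMod.natCast_eq_natCast_iff _ _ _).mpr
    (Choose.choose_modEq_choose_mod_mul_choose_div_nat (p := 2) (n := 2 * m - 1) (k := m))
  rcases Nat.even_or_odd m with ⟨t, ht⟩ | ⟨t, ht⟩
  · -- m = 2t, t ≥ 1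
    have ht' : m = 2 * t := by omega
    have h1 : (2 * m - 1) % 2 = 1 := by omega
    have h2 : (2 * m - 1) / 2 = 2 * t - 1 := by omega
    have h3 : m % 2 = 0 := by omega
    have h4 : m / 2 = t := by omega
    rw [h1, h2, h3, h4] at lucas
    simp only [Nat.choose_zero_right, Nat.choose_one_right] at lucas
    have ht1 : 1 ≤ t := by omega
    rw [lucas]
    push_cast
    rw [one_mul, ih t (by omega) ht1]
    constructor
    · rintro ⟨j, rfl⟩; exact ⟨j + 1, by rw [ht', pow_succ]; ring⟩
    · rintro ⟨j, hj⟩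
      cases j with
      | zero => omega
      | succ j => exact ⟨j, by rw [pow_succ] at hj; omega⟩
  · -- m = 2t + 1
    rcases Nat.eq_zero_or_pos t with rfl | htpos
    · simp only [show m = 1 by omega]
      norm_num
      exact ⟨0, rfl⟩
    · have h1 : (2 * m - 1) % 2 = 1 := by omega
      have h2 : (2 * m - 1) / 2 = 2 * t := by omega
      have h3 : m % 2 = 1 := by omega
      have h4 : m / 2 = t := by omega
      rw [h1, h2, h3, h4] at lucas
      simp only [Nat.choose_self, one_mul] at lucas
      obtain ⟨s, rfl⟩ : ∃ s, t = s + 1 := ⟨t - 1, by omega⟩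
      have hcb : (2 * (s + 1)).choose (s + 1) = 2 * ((2 * s + 1).choose (s + 1)) := by
        have e : 2 * (s + 1) = (2 * s + 1) + 1 := by ring
        rw [e, Nat.choose_succ_succ]
        have : (2 * s + 1).choose s = (2 * s + 1).choose (s + 1) := by
          have := Nat.choose_symm (n := 2 * s + 1) (k := s + 1) (by omega)
          simpa [show 2 * s + 1 - (s + 1) = s by omega] using this
        simp only [Nat.succ_eq_add_one] at *
        omega
      have hz : ((2 * ((2 * s + 1).choose (s + 1)) : ℕ) : ZMod 2) = 0 := by
        rw [Nat.cast_mul, ZMod.natCast_self, zero_mul]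
      rw [lucas, hcb, hz]
      constructor
      · intro h; exact absurd h zero_ne_one
      · rintro ⟨j, hj⟩
        exfalso
        cases j with
        | zero => omega
        | succ j =>
          have : 2 ∣ 2 ^ (j + 1) := dvd_pow_self 2 (by omega)
          omega

theorem b_odd_iff_pow_two (b : ℕ → ℤ) (h1 : b 1 = 1)
    (hrec : ∀ n : ℕ, 2 ≤ n →
      b n =
        ∑ k ∈ Finset.Icc 1 (n - 1),
          ((n - 1).choose k : ℤ) * ((n - 1).choose (k - 1)) * b k * b (n - k)) :
    ∀ n : ℕ, 1 ≤ n → (Odd (b n) ↔ ∃ m : ℕ, n = 2 ^ m) := by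
  have hodd : ∀ x : ℤ, Odd x ↔ ((x : ZMod 2) = 1) := by
    intro x
    rw [show (1 : ZMod 2) = ((1 : ℤ) : ZMod 2) by norm_num,
      ZMod.intCast_eq_intCast_iff, Int.ModEq, Int.odd_iff]
    omega
  suffices H : ∀ n, 1 ≤ n → (((b n : ZMod 2)) = 1 ↔ ∃ m, n = 2 ^ m) by
    intro n hn; rw [hodd]; exact H n hn
  intro n
  induction n using Nat.strong_induction_on with
  | _ n ih =>
  intro hn
  rcases eq_or_lt_of_le hn with h1' | hn2
  · rw [← h1', h1]; norm_num; exact ⟨0, rfl⟩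
  · -- n ≥ 2
    set f : ℕ → ZMod 2 := fun k =>
      ((n - 1).choose k : ZMod 2) * ((n - 1).choose (k - 1) : ZMod 2) *
        (b k : ZMod 2) * (b (n - k) : ZMod 2) with hf
    have hc : ((b n : ZMod 2)) = ∑ k ∈ Finset.Icc 1 (n - 1), f k := by
      rw [hrec n hn2]; push_cast; rfl
    have hsym : ∀ k ∈ Finset.Icc 1 (n - 1), f (n - k) = f k := by
      intro k hk
      simp only [Finset.mem_Icc] at hk
      have e1 : (n - 1).choose (n - k) = (n - 1).choose (k - 1) := by
        rw [show n - k = (n - 1) - (k - 1) by omega, Nat.choose_symm (by omega)]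
      have e2 : (n - 1).choose (n - k - 1) = (n - 1).choose k := by
        rw [show n - k - 1 = (n - 1) - k by omega, Nat.choose_symm (by omega)]
      simp only [hf, e1, e2, show n - (n - k) = k by omega]
      ring
    have hadd : ∀ a ∈ Finset.Icc 1 (n - 1), f a + f (n - a) = 0 := by
      intro a ha; rw [hsym a ha]; exact CharTwo.add_self_eq_zero _
    rcases Nat.even_or_odd n with ⟨m, hnm⟩ | hodd_n
    · -- n = 2m even
      have hnm' : n = 2 * m := by omega
      have hm1 : 1 ≤ m := by omega
      have hmmem : m ∈ Finset.Icc 1 (n - 1) := by simp [Finset.mem_Icc]; omega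
      have herase : ∑ k ∈ (Finset.Icc 1 (n - 1)).erase m, f k = 0 := by
        apply Finset.sum_involution (fun a _ => n - a)
        · intro a ha
          exact hadd a (Finset.mem_of_mem_erase ha)
        · intro a ha _
          simp only [Finset.mem_erase, Finset.mem_Icc] at ha
          omega
        · intro a ha
          simp only [Finset.mem_erase, Finset.mem_Icc] at ha ⊢
          omega
        · intro a ha
          simp only [Finset.mem_erase, Finset.mem_Icc] at ha
          omega
      have hmid : ((b n : ZMod 2)) = ((n - 1).choose m : ZMod 2) * (b m : ZMod 2) := by
        rw [hc, ← Finset.add_sum_erase _ f hmmem, herase, add_zero]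
        have e3 : (n - 1).choose (m - 1) = (n - 1).choose m := by
          rw [show m - 1 = (n - 1) - m by omega, Nat.choose_symm (by omega)]
        simp only [hf, e3]
        rw [show ((n-1).choose m : ZMod 2) * ((n-1).choose m : ZMod 2) * (b m : ZMod 2)
            * (b (n - m) : ZMod 2)
          = (((n-1).choose m : ZMod 2) * ((n-1).choose m : ZMod 2))
            * ((b m : ZMod 2) * (b (n - m) : ZMod 2)) by ring,
          show n - m = m by omega, zmod2_sq, zmod2_sq]
      rw [hmid, zmod2_mul_eq_one]
      have hch : ((n - 1).choose m : ZMod 2) = 1 ↔ ∃ j : ℕ, m = 2 ^ j := by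
        rw [show n - 1 = 2 * m - 1 by omega]
        exact choose_parity m hm1
      rw [hch, ih m (by omega) hm1]
      constructor
      · rintro ⟨⟨j, rfl⟩, -⟩
        exact ⟨j + 1, by rw [hnm', pow_succ]; ring⟩
      · rintro ⟨j, hj⟩
        cases j with
        | zero => omega
        | succ j =>
          rw [pow_succ] at hj
          have : m = 2 ^ j := by omega
          exact ⟨⟨j, this⟩, ⟨j, this⟩⟩
    · -- n odd ≥ 3
      have hzero : ∑ k ∈ Finset.Icc 1 (n - 1), f k = 0 := by
        apply Finset.sum_involution (fun a _ => n - a)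
        · exact hadd
        · intro a ha _
          simp only [Finset.mem_Icc] at ha
          rcases hodd_n with ⟨t, ht⟩
          omega
        · intro a ha
          simp only [Finset.mem_Icc] at ha ⊢
          omega
        · intro a ha
          simp only [Finset.mem_Icc] at ha
          omega
      rw [hc, hzero]
      constructor
      · intro h; exact absurd h zero_ne_one
      · rintro ⟨j, hj⟩
        exfalso
        rcases hodd_n with ⟨t, ht⟩
        cases j with
        | zero => omega
        | succ j =>
          have : 2 ∣ 2 ^ (j + 1) := dvd_pow_self 2 (by omega)
          omega
end

section
/- The Narayana polynomial N_r(z) = Σ_{k=1}^{r} (1/r) C(r, k-1) C(r, k) z^{k-1} satisfies N_r(z) = Σ_{m ≥ 0} z^m (z+1)^{r-2m-1} C(r-1, 2m) Cat_m, where Cat_m = C(2m,m)/(m+1) is the m-th Catalan number. -/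
open Finset

/-- Trinomial revision, valid universally in `ℕ`. -/
lemma trinom (n a b : ℕ) :
    n.choose a * (n - a).choose b = n.choose (a + b) * (a + b).choose a := by
  rcases le_or_gt a n with h | h
  · rcases le_or_gt b (n - a) with hb | hb
    · have hab : a + b ≤ n := by omega
      have h1 := Nat.choose_mul_factorial_mul_factorial h
      have h2 := Nat.choose_mul_factorial_mul_factorial hb
      have h3 := Nat.choose_mul_factorial_mul_factorial hab
      have h4 := Nat.choose_mul_factorial_mul_factorial (Nat.le_add_right a b)
      have hsub : n - a - b = n - (a + b) := by omega
      have hba : a + b - a = b := by omega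
      rw [hsub] at h2
      rw [hba] at h4
      have key : (n.choose a * (n - a).choose b) * (a.factorial * b.factorial * (n - (a+b)).factorial)
          = (n.choose (a + b) * (a + b).choose a) * (a.factorial * b.factorial * (n - (a+b)).factorial) := by
        calc (n.choose a * (n - a).choose b) * (a.factorial * b.factorial * (n - (a+b)).factorial)
            = (n.choose a * a.factorial) * ((n - a).choose b * b.factorial * (n - (a+b)).factorial) := by ring
          _ = (n.choose a * a.factorial) * (n - a).factorial := by rw [h2]
          _ = n.factorial := by rw [← h1]
          _ = n.choose (a+b) * (a+b).factorial * (n - (a+b)).factorial := by rw [h3]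
          _ = n.choose (a+b) * ((a+b).choose a * a.factorial * b.factorial) * (n - (a+b)).factorial := by rw [h4]
          _ = (n.choose (a + b) * (a + b).choose a) * (a.factorial * b.factorial * (n - (a+b)).factorial) := by ring
      exact Nat.eq_of_mul_eq_mul_right (by positivity) key
    · rw [Nat.choose_eq_zero_of_lt hb, Nat.choose_eq_zero_of_lt (by omega : n < a + b)]
      ring
  · rw [Nat.choose_eq_zero_of_lt h, Nat.choose_eq_zero_of_lt (by omega : n < a + b)]
    ring

/-- Key summation identity. -/
lemma key_sum (r j : ℕ) (h : j ≤ r) :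
    r.choose j * r.choose (j + 1)
      = ∑ m ∈ range (j + 1), j.choose m * (r.choose (j + m + 1) * (j + m + 1).choose (m + 1)) := by
  have hv : r.choose (j + 1) = ∑ t ∈ range (j + 2), j.choose t * (r - j).choose (j + 1 - t) := by
    conv_lhs => rw [show r = j + (r - j) by omega]
    rw [Nat.add_choose_eq, Finset.Nat.sum_antidiagonal_eq_sum_range_succ_mk]
  rw [hv, Finset.mul_sum]
  have step : ∀ t ∈ range (j + 2),
      r.choose j * (j.choose t * (r - j).choose (j + 1 - t))
        = j.choose t * (r.choose (j + (j + 1 - t)) * (j + (j + 1 - t)).choose j) := by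
    intro t _
    have h := trinom r j (j + 1 - t)
    rw [← h]; ring
  rw [Finset.sum_congr rfl step]
  rw [Finset.sum_range_succ]
  have : j.choose (j + 1) = 0 := Nat.choose_eq_zero_of_lt (by omega)
  rw [this]
  simp only [zero_mul, add_zero]
  rw [← Finset.sum_range_reflect]
  refine Finset.sum_congr rfl ?_
  intro m hm
  have hmj : m ≤ j := by simpa using Nat.lt_succ_iff.mp (mem_range.mp hm)
  have h1 : j + 1 - 1 - m = j - m := by omega
  have h2 : j + 1 - (j - m) = m + 1 := by omega
  rw [h1, h2]
  have h3 : j.choose (j - m) = j.choose m := Nat.choose_symm hmj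
  have h4 : (j + (m + 1)).choose j = (j + m + 1).choose (m + 1) := by
    have h5 := Nat.choose_symm (show m + 1 ≤ j + m + 1 by omega)
    rw [show j + m + 1 - (m + 1) = j by omega] at h5
    rw [show j + (m + 1) = j + m + 1 by omega, h5]
  rw [h3, h4, show j + (m + 1) = j + m + 1 by omega]

/-- Per-term identity over ℚ. -/
lemma term_eq (r j m : ℕ) (hr : 1 ≤ r) (hm : m ≤ j) :
    ((r - 1).choose (2 * m) : ℚ) * ((2 * m).choose m) * ((r - 1 - 2 * m).choose (j - m)) * r
      = (j.choose m) * ((r.choose (j + m + 1)) * ((j + m + 1).choose (m + 1))) * (m + 1) := by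
  rcases le_or_gt (2 * m + 1) r with hc | hc
  · -- genuine case
    have e1 : ((r - 1).choose m : ℚ) * ((r - 1 - m).choose m)
        = ((r - 1).choose (2 * m)) * ((2 * m).choose m) := by
      have := trinom (r - 1) m m
      rw [show m + m = 2 * m by ring] at this
      exact_mod_cast congrArg (Nat.cast : ℕ → ℚ) this
    have e2 : ((r - 1 - m).choose m : ℚ) * ((r - 1 - 2 * m).choose (j - m))
        = ((r - 1 - m).choose j) * (j.choose m) := by
      have := trinom (r - 1 - m) m (j - m)
      rw [show r - 1 - m - m = r - 1 - 2 * m by omega, show m + (j - m) = j by omega] at this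
      exact_mod_cast congrArg (Nat.cast : ℕ → ℚ) this
    have e3 : (r : ℚ) * ((r - 1).choose m) = (r.choose (m + 1)) * (m + 1) := by
      have := Nat.add_one_mul_choose_eq (r - 1) m
      rw [show r - 1 + 1 = r by omega] at this
      exact_mod_cast congrArg (Nat.cast : ℕ → ℚ) this
    have e4 : ((r.choose (m + 1)) : ℚ) * ((r - 1 - m).choose j)
        = (r.choose (j + m + 1)) * ((j + m + 1).choose (m + 1)) := by
      have := trinom r (m + 1) j
      rw [show r - (m + 1) = r - 1 - m by omega, show m + 1 + j = j + m + 1 by omega] at this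
      exact_mod_cast congrArg (Nat.cast : ℕ → ℚ) this
    linear_combination (-(r : ℚ) * ((r - 1 - 2 * m).choose (j - m))) * e1
      + ((r : ℚ) * ((r - 1).choose m)) * e2
      + (((r - 1 - m).choose j : ℚ) * (j.choose m)) * e3
      + (((m : ℚ) + 1) * (j.choose m)) * e4
  · -- degenerate case : both sides vanish
    have h1 : (r - 1).choose (2 * m) = 0 := Nat.choose_eq_zero_of_lt (by omega)
    have h2 : r.choose (j + m + 1) = 0 := Nat.choose_eq_zero_of_lt (by omega)
    rw [h1, h2]
    push_cast
    ring

theorem narayana_coker (r : ℕ) (hr : 1 ≤ r) (z : ℚ) :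
    ∑ k ∈ Finset.Icc 1 r,
        (1 / (r : ℚ)) * (r.choose (k - 1)) * (r.choose k) * z ^ (k - 1) =
      ∑ m ∈ Finset.range ((r - 1) / 2 + 1),
        z ^ m * (z + 1) ^ (r - 2 * m - 1) * ((r - 1).choose (2 * m)) *
          (((2 * m).choose m : ℚ) / (m + 1)) := by
  have hrQ : (r : ℚ) ≠ 0 := Nat.cast_ne_zero.mpr (by omega)
  -- Step 1: rewrite LHS as sum over range r
  have hL : ∑ k ∈ Finset.Icc 1 r,
        (1 / (r : ℚ)) * (r.choose (k - 1)) * (r.choose k) * z ^ (k - 1)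
      = ∑ j ∈ range r, ((r.choose j : ℚ) * (r.choose (j + 1)) / r) * z ^ j := by
    rw [show Finset.Icc 1 r = Finset.Ico 1 (r + 1) by rw [Finset.Ico_add_one_right_eq_Icc],
      Finset.sum_Ico_eq_sum_range]
    refine Finset.sum_congr (by norm_num) ?_
    intro j _
    rw [show 1 + j - 1 = j by omega, show 1 + j = j + 1 by omega]
    ring
  rw [hL]
  -- Step 2: expand RHS
  have hR : ∀ m ∈ range ((r - 1) / 2 + 1),
      z ^ m * (z + 1) ^ (r - 2 * m - 1) * ((r - 1).choose (2 * m)) *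
          (((2 * m).choose m : ℚ) / (m + 1))
        = ∑ i ∈ range (r - 2 * m - 1 + 1),
            z ^ (m + i) * ((r - 2 * m - 1).choose i) * ((r - 1).choose (2 * m)) *
              (((2 * m).choose m : ℚ) / (m + 1)) := by
    intro m _
    rw [add_pow]
    simp only [one_pow, mul_one]
    rw [Finset.mul_sum, Finset.sum_mul, Finset.sum_mul]
    refine Finset.sum_congr rfl ?_
    intro i _
    rw [pow_add]
    ring
  rw [Finset.sum_congr rfl hR]
  -- Step 3: reindex the double sum
  rw [Finset.sum_sigma' (range ((r - 1) / 2 + 1)) (fun m => range (r - 2 * m - 1 + 1))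
    (fun m i => z ^ (m + i) * ((r - 2 * m - 1).choose i) * ((r - 1).choose (2 * m)) *
      (((2 * m).choose m : ℚ) / (m + 1)))]
  rw [Finset.sum_nbij' (i := fun p => (⟨p.1 + p.2, p.1⟩ : Σ _ : ℕ, ℕ))
    (j := fun q => (⟨q.2, q.1 - q.2⟩ : Σ _ : ℕ, ℕ))
    (t := (range r).sigma (fun j => (range (j + 1)).filter (fun m => j + m + 1 ≤ r)))
    (g := fun q => z ^ q.1 * ((r - 2 * q.2 - 1).choose (q.1 - q.2)) * ((r - 1).choose (2 * q.2)) *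
      (((2 * q.2).choose q.2 : ℚ) / (q.2 + 1)))
    (by
      rintro ⟨m, i⟩ hp
      simp only [Finset.mem_sigma, Finset.mem_range, Finset.mem_filter] at hp ⊢
      have h2m : 2 * m ≤ r - 1 := by
        have := hp.1; omega
      omega)
    (by
      rintro ⟨j, m⟩ hq
      simp only [Finset.mem_sigma, Finset.mem_range, Finset.mem_filter] at hq ⊢
      omega)
    (by rintro ⟨m, i⟩ _; simp)
    (by
      rintro ⟨j, m⟩ hq
      simp only [Finset.mem_sigma, Finset.mem_range, Finset.mem_filter] at hq
      have hjm : m + (j - m) = j := by omega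
      simp only [hjm])
    (by
      rintro ⟨m, i⟩ hp
      simp only [Finset.mem_sigma, Finset.mem_range] at hp
      simp only [Nat.add_sub_cancel_left])]
  rw [Finset.sum_sigma]
  simp only
  -- Step 4: per-j inner sums
  refine Finset.sum_congr rfl ?_
  intro j hj
  have hjr : j < r := mem_range.mp hj
  -- extend the filtered sum to the full range
  rw [Finset.sum_filter_of_ne (fun m hm hne => by
    by_contra hc'
    apply hne
    simp only [Finset.mem_range] at hm
    push_neg at hc'
    rcases le_or_gt (2 * m + 1) r with hc | hc
    · rw [Nat.choose_eq_zero_of_lt (show r - 2 * m - 1 < j - m by omega)]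
      push_cast; ring
    · rw [Nat.choose_eq_zero_of_lt (show r - 1 < 2 * m by omega)]
      push_cast; ring)]
  -- now prove the coefficient identity
  have hterm : ∀ m ∈ range (j + 1),
      z ^ j * ((r - 2 * m - 1).choose (j - m)) * ((r - 1).choose (2 * m)) *
          (((2 * m).choose m : ℚ) / (m + 1))
        = z ^ j / r * ((j.choose m : ℚ) * ((r.choose (j + m + 1)) * ((j + m + 1).choose (m + 1)))) := by
    intro m hm
    have hmj : m ≤ j := Nat.lt_succ_iff.mp (mem_range.mp hm)
    have := term_eq r j m hr hmj
    rw [show r - 2 * m - 1 = r - 1 - 2 * m by omega]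
    have hm1 : ((m : ℚ) + 1) ≠ 0 := by positivity
    field_simp
    linear_combination z ^ j * this
  rw [Finset.sum_congr rfl hterm, ← Finset.mul_sum]
  have hcast : (∑ m ∈ range (j + 1),
        ((j.choose m : ℚ) * ((r.choose (j + m + 1)) * ((j + m + 1).choose (m + 1)))))
      = (r.choose j : ℚ) * (r.choose (j + 1)) := by
    have h := congrArg (Nat.cast : ℕ → ℚ) (key_sum r j (le_of_lt hjr))
    push_cast at h
    exact h.symm
  rw [hcast]
  ring
end

section
/- For n ≥ 0, the Narayana polynomial satisfies N_{n+1}(z) = Σ_{k=0}^{n} (1/(k+1)) C(n, k) C(n+k+2, k) z^k (1-z)^{n-k}. -/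
open Finset

lemma vander_aux (n k : ℕ) (hk : k ≤ n) :
    ∑ j ∈ range (k + 1), (k + 1).choose (j + 1) * (n + 1).choose j = (n + k + 2).choose k := by
  have h1 : (n + k + 2).choose k = (n + k + 2).choose (n + 2) := by
    rw [← Nat.choose_symm (show n + 2 ≤ n + k + 2 by omega)]; congr 1; omega
  rw [h1, show n + k + 2 = (k + 1) + (n + 1) by omega, Nat.add_choose_eq,
    Finset.Nat.sum_antidiagonal_eq_sum_range_succ_mk]
  conv_rhs => rw [Finset.sum_range_succ']
  have h0 : (n + 1).choose (n + 2 - 0) = 0 := Nat.choose_eq_zero_of_lt (by omega)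
  rw [h0, Nat.mul_zero, Nat.add_zero]
  have h2 : ∑ a ∈ range (n + 2), (k + 1).choose (a + 1) * (n + 1).choose (n + 2 - (a + 1))
      = ∑ a ∈ range (k + 1), (k + 1).choose (a + 1) * (n + 1).choose (n + 2 - (a + 1)) :=
    (Finset.sum_subset (Finset.range_subset_range.mpr (by omega)) (fun x _ hx => by
      have hxk : k + 1 < x + 1 := by
        simp only [Finset.mem_range] at hx; omega
      rw [Nat.choose_eq_zero_of_lt hxk, Nat.zero_mul])).symm
  rw [h2]
  apply Finset.sum_congr rfl
  intro j hj
  have hjk : j ≤ k := Finset.mem_range_succ_iff.mp hj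
  congr 1
  rw [show n + 2 - (j + 1) = n + 1 - j by omega, Nat.choose_symm (by omega : j ≤ n + 1)]

lemma key_lemma (n k : ℕ) (hk : k ≤ n) :
    ∑ j ∈ range (k + 1),
        (n + 1).choose (j + 1) * (n + 1).choose j * (n - j).choose (k - j) =
      (n + 1).choose (k + 1) * (n + k + 2).choose k := by
  have h : ∀ j ∈ range (k + 1),
      (n + 1).choose (j + 1) * (n + 1).choose j * (n - j).choose (k - j)
        = (n + 1).choose (k + 1) * ((k + 1).choose (j + 1) * (n + 1).choose j) := by
    intro j hj
    have hjk : j ≤ k := Finset.mem_range_succ_iff.mp hj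
    have hcm := Nat.choose_mul (n := n + 1) (k := k + 1) (show j + 1 ≤ k + 1 by omega)
    rw [show n + 1 - (j + 1) = n - j by omega, show k + 1 - (j + 1) = k - j by omega] at hcm
    rw [Nat.mul_right_comm, ← hcm]; ring
  rw [Finset.sum_congr rfl h, ← Finset.mul_sum, vander_aux n k hk]

theorem narayana_sum_form_one (n : ℕ) (z : ℚ) :
    (1 / ((n : ℚ) + 1)) *
        ∑ k ∈ Finset.range (n + 1), ((n + 1).choose (k + 1) : ℚ) * ((n + 1).choose k) * z ^ k =
      ∑ k ∈ Finset.range (n + 1),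
        (1 / ((k : ℚ) + 1)) * (n.choose k) * ((n + k + 2).choose k) * z ^ k * (1 - z) ^ (n - k) := by
  have hz : z + (1 - z) = 1 := by ring
  rw [Finset.mul_sum]
  have step1 : ∀ j ∈ range (n + 1),
      (1 / ((n : ℚ) + 1)) * (((n + 1).choose (j + 1) : ℚ) * ((n + 1).choose j) * z ^ j)
        = ∑ k ∈ Finset.Ico j (n + 1),
            (1 / ((n : ℚ) + 1)) * ((n + 1).choose (j + 1)) * ((n + 1).choose j)
              * ((n - j).choose (k - j)) * z ^ k * (1 - z) ^ (n - k) := by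
    intro j hj
    have hjn : j ≤ n := Finset.mem_range_succ_iff.mp hj
    rw [Finset.sum_Ico_eq_sum_range, show n + 1 - j = (n - j) + 1 by omega]
    have hb : ∑ i ∈ range (n - j + 1), z ^ i * (1 - z) ^ (n - j - i) * ((n - j).choose i : ℚ)
        = 1 := by rw [← add_pow, hz, one_pow]
    calc (1 / ((n : ℚ) + 1)) * (((n + 1).choose (j + 1) : ℚ) * ((n + 1).choose j) * z ^ j)
        = (1 / ((n : ℚ) + 1)) * (((n + 1).choose (j + 1) : ℚ) * ((n + 1).choose j) * z ^ j) *
            ∑ i ∈ range (n - j + 1), z ^ i * (1 - z) ^ (n - j - i) * ((n - j).choose i : ℚ) := by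
          rw [hb, mul_one]
      _ = ∑ i ∈ range (n - j + 1),
            (1 / ((n : ℚ) + 1)) * ((n + 1).choose (j + 1)) * ((n + 1).choose j)
              * ((n - j).choose (j + i - j)) * z ^ (j + i) * (1 - z) ^ (n - (j + i)) := by
          rw [Finset.mul_sum]
          apply Finset.sum_congr rfl
          intro i hi
          have hin : i ≤ n - j := Finset.mem_range_succ_iff.mp hi
          rw [show j + i - j = i by omega, show n - (j + i) = n - j - i by omega, pow_add]
          ring
  rw [Finset.sum_congr rfl step1]
  rw [Finset.sum_comm' (t' := range (n + 1)) (s' := fun k => range (k + 1))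
    (by intro x y; simp only [Finset.mem_range, Finset.mem_Ico]; omega)]
  apply Finset.sum_congr rfl
  intro k hk
  have hkn : k ≤ n := Finset.mem_range_succ_iff.mp hk
  have hsum : ∑ j ∈ range (k + 1),
      (1 / ((n : ℚ) + 1)) * ((n + 1).choose (j + 1)) * ((n + 1).choose j)
        * ((n - j).choose (k - j)) * z ^ k * (1 - z) ^ (n - k)
      = (1 / ((n : ℚ) + 1)) * (((∑ j ∈ range (k + 1),
          (n + 1).choose (j + 1) * (n + 1).choose j * (n - j).choose (k - j) : ℕ)) : ℚ)
          * z ^ k * (1 - z) ^ (n - k) := by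
    push_cast
    rw [Finset.mul_sum, Finset.sum_mul, Finset.sum_mul]
    apply Finset.sum_congr rfl
    intro j _
    ring
  rw [hsum, key_lemma n k hkn]
  have hchoose : ((k : ℚ) + 1) * ((n + 1).choose (k + 1)) = ((n : ℚ) + 1) * (n.choose k) := by
    have h2 : ((n + 1) * n.choose k : ℕ) = ((n + 1).choose (k + 1) * (k + 1) : ℕ) :=
      Nat.add_one_mul_choose_eq n k
    have h2' : ((n : ℚ) + 1) * (n.choose k) = ((n + 1).choose (k + 1) : ℚ) * ((k : ℚ) + 1) := by
      exact_mod_cast h2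
    linear_combination -h2'
  have hn1 : ((n : ℚ) + 1) ≠ 0 := by positivity
  have hk1 : ((k : ℚ) + 1) ≠ 0 := by positivity
  push_cast
  field_simp
  linear_combination (((n + k + 2).choose k : ℚ) * z ^ k * (1 - z) ^ (n - k)) * hchoose
end

section
/- For n ≥ 0, the Narayana polynomial satisfies N_{n+1}(z) = (1/(n+1)) Σ_{k=0}^{n} C(n+1, k) C(2n+2-k, n-k) z^{n-k} (1-z)^k. -/
open Finset

lemma triangle_swap {M : Type*} [AddCommMonoid M] (n : ℕ) (f : ℕ → ℕ → M) :
    ∑ k ∈ Finset.range (n + 1), ∑ j ∈ Finset.range (n - k + 1), f k j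
      = ∑ j ∈ Finset.range (n + 1), ∑ k ∈ Finset.range (n - j + 1), f k j := by
  rw [Finset.sum_sigma', Finset.sum_sigma']
  apply Finset.sum_nbij' (fun p => ⟨p.2, p.1⟩) (fun p => ⟨p.2, p.1⟩) <;>
    simp only [Finset.mem_sigma, Finset.mem_range] <;> intros <;> first | omega | rfl | trivial

lemma choose_swap (n j k : ℕ) (h : k + j ≤ n) :
    (n + 1).choose k * (n + 1 - k).choose (j + 1) =
      (n + 1).choose (j + 1) * (n - j).choose k := by
  have A := Nat.choose_mul (n := n + 1) (show k ≤ k + j + 1 by omega)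
  have B := Nat.choose_mul (n := n + 1) (show j + 1 ≤ k + j + 1 by omega)
  have hs : (k + j + 1).choose k = (k + j + 1).choose (j + 1) := by
    rw [← Nat.choose_symm (by omega)]
    congr 1
    omega
  have h1 : k + j + 1 - k = j + 1 := by omega
  have h2 : k + j + 1 - (j + 1) = k := by omega
  have h3 : n + 1 - (j + 1) = n - j := by omega
  rw [h1] at A
  rw [h2, h3] at B
  rw [← A, hs, B]

theorem narayana_sum_form_two (n : ℕ) (z : ℚ) :
    (1 / ((n : ℚ) + 1)) *
        ∑ k ∈ Finset.range (n + 1), ((n + 1).choose (k + 1) : ℚ) * ((n + 1).choose k) * z ^ k =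
      (1 / ((n : ℚ) + 1)) *
        ∑ k ∈ Finset.range (n + 1),
          ((n + 1).choose k : ℚ) * ((2 * n + 2 - k).choose (n - k)) * z ^ (n - k) * (1 - z) ^ k := by
  congr 1
  rw [eq_comm]
  calc
    ∑ k ∈ Finset.range (n + 1),
        ((n + 1).choose k : ℚ) * ((2 * n + 2 - k).choose (n - k)) * z ^ (n - k) * (1 - z) ^ k
      = ∑ k ∈ Finset.range (n + 1), ∑ j ∈ Finset.range (n - k + 1),
          ((n + 1).choose k : ℚ) * (((n + 1).choose j : ℚ) * ((n + 1 - k).choose (n - k - j) : ℚ))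
            * z ^ (n - k) * (1 - z) ^ k := by
        refine Finset.sum_congr rfl fun k hk => ?_
        have hk' : k ≤ n := by simpa [Nat.lt_succ_iff] using hk
        have h2 : 2 * n + 2 - k = (n + 1) + (n + 1 - k) := by omega
        have hv : ((2 * n + 2 - k).choose (n - k) : ℚ)
            = ∑ j ∈ Finset.range (n - k + 1),
                ((n + 1).choose j : ℚ) * ((n + 1 - k).choose (n - k - j) : ℚ) := by
          rw [h2, Nat.add_choose_eq,
            Finset.Nat.sum_antidiagonal_eq_sum_range_succ
              (fun a b => (n + 1).choose a * (n + 1 - k).choose b)]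
          push_cast
          rfl
        rw [hv, Finset.mul_sum, Finset.sum_mul, Finset.sum_mul]
    _ = ∑ j ∈ Finset.range (n + 1), ∑ k ∈ Finset.range (n - j + 1),
          ((n + 1).choose k : ℚ) * (((n + 1).choose j : ℚ) * ((n + 1 - k).choose (n - k - j) : ℚ))
            * z ^ (n - k) * (1 - z) ^ k :=
        triangle_swap n _
    _ = ∑ j ∈ Finset.range (n + 1), ((n + 1).choose (j + 1) : ℚ) * ((n + 1).choose j) * z ^ j := by
        refine Finset.sum_congr rfl fun j hj => ?_
        have hj' : j ≤ n := by simpa [Nat.lt_succ_iff] using hj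
        have key : ∀ k ∈ Finset.range (n - j + 1),
            ((n + 1).choose k : ℚ) * (((n + 1).choose j : ℚ)
              * ((n + 1 - k).choose (n - k - j) : ℚ)) * z ^ (n - k) * (1 - z) ^ k
            = (((n + 1).choose (j + 1) : ℚ) * ((n + 1).choose j) * z ^ j)
              * ((1 - z) ^ k * z ^ (n - j - k) * ((n - j).choose k : ℚ)) := by
          intro k hk
          have hk' : k + j ≤ n := by
            simp only [Finset.mem_range] at hk; omega
          have hsymm : (n + 1 - k).choose (n - k - j) = (n + 1 - k).choose (j + 1) := by
            rw [← Nat.choose_symm (show j + 1 ≤ n + 1 - k by omega)]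
            congr 1
            omega
          have hc : ((n + 1).choose k : ℚ) * ((n + 1 - k).choose (j + 1) : ℚ)
              = ((n + 1).choose (j + 1) : ℚ) * ((n - j).choose k : ℚ) := by
            exact_mod_cast congrArg (Nat.cast : ℕ → ℚ) (choose_swap n j k hk')
          have hz : z ^ (n - k) = z ^ j * z ^ (n - j - k) := by
            rw [← pow_add]
            congr 1
            omega
          rw [hsymm, hz]
          calc ((n + 1).choose k : ℚ) * (((n + 1).choose j : ℚ) * ((n + 1 - k).choose (j + 1) : ℚ))
                * (z ^ j * z ^ (n - j - k)) * (1 - z) ^ k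
              = (((n + 1).choose k : ℚ) * ((n + 1 - k).choose (j + 1) : ℚ))
                  * (((n + 1).choose j : ℚ) * (z ^ j * z ^ (n - j - k)) * (1 - z) ^ k) := by ring
            _ = (((n + 1).choose (j + 1) : ℚ) * ((n - j).choose k : ℚ))
                  * (((n + 1).choose j : ℚ) * (z ^ j * z ^ (n - j - k)) * (1 - z) ^ k) := by
                rw [hc]
            _ = (((n + 1).choose (j + 1) : ℚ) * ((n + 1).choose j) * z ^ j)
                  * ((1 - z) ^ k * z ^ (n - j - k) * ((n - j).choose k : ℚ)) := by ring
        rw [Finset.sum_congr rfl key, ← Finset.mul_sum]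
        have hone : ∑ k ∈ Finset.range (n - j + 1),
            (1 - z) ^ k * z ^ (n - j - k) * ((n - j).choose k : ℚ) = 1 := by
          have := add_pow (1 - z) z (n - j)
          rw [sub_add_cancel, one_pow] at this
          rw [← this]
        rw [hone, mul_one]
end

section
/- Let X have the semicircular density f_1(x) = (2/π)√(1-x²) on [-1,1]. Then for every r ≥ 1, the Narayana polynomial satisfies N_r(z) = E[(1 + z + 2√z X)^{r-1}] for all z ≥ 0. -/
open intervalIntegral Complex Finset Real

noncomputable def Jv (m : ℤ) : ℂ := if m = 0 then (Real.pi : ℂ) else ((-1:ℂ)^m - 1)/(m * I)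

lemma Jlem (m : ℤ) : (∫ θ in (0:ℝ)..Real.pi, Complex.exp ((m * I) * θ)) = Jv m := by
  unfold Jv
  split_ifs with h
  · subst h; simp
  · have hc : (m : ℂ) * I ≠ 0 := by
      simp [Complex.I_ne_zero, Int.cast_injective.ne_iff.mpr h]
      exact_mod_cast h
    rw [integral_exp_mul_complex hc]
    have : Complex.exp ((m:ℂ) * I * (Real.pi:ℝ)) = (-1:ℂ)^m := by
      rw [show ((m:ℂ) * I * (Real.pi:ℝ)) = m * ((Real.pi:ℝ) * I) by ring, Complex.exp_int_mul,
        Complex.exp_pi_mul_I]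
    rw [this]
    simp [Complex.exp_zero]

lemma Jneg (m : ℤ) (h : m ≠ 0) : Jv (-m) = - Jv m := by
  unfold Jv
  rw [if_neg (by omega), if_neg h]
  have h1 : ((-1:ℂ))^(-m) = (-1:ℂ)^m := by
    rw [zpow_neg]
    refine inv_eq_of_mul_eq_one_right ?_
    rw [← mul_zpow]; norm_num
  rw [h1]
  push_cast
  ring

noncomputable def Iv (k : ℤ) : ℂ := ∫ θ in (0:ℝ)..Real.pi, Complex.exp ((k * I) * θ) * (Complex.sin θ)^2

lemma intexp (c : ℂ) : IntervalIntegrable (fun θ : ℝ => Complex.exp (c * θ)) MeasureTheory.volume 0 Real.pi := by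
  apply Continuous.intervalIntegrable
  fun_prop

lemma Ilem (k : ℤ) : Iv k = (2 * Jv k - Jv (k+2) - Jv (k-2))/4 := by
  unfold Iv
  have hpt : ∀ θ : ℝ, Complex.exp ((k * I) * θ) * (Complex.sin θ)^2
      = (2 * Complex.exp ((k * I) * θ) - Complex.exp ((((k:ℂ)+2) * I) * θ) - Complex.exp ((((k:ℂ)-2) * I) * θ))/4 := by
    intro θ
    have hsin : Complex.sin θ = (Complex.exp (-(θ:ℂ) * I) - Complex.exp ((θ:ℂ) * I)) * I / 2 := rfl
    have h1 : Complex.exp ((((k:ℂ)+2) * I) * θ) = Complex.exp ((k * I) * θ) * (Complex.exp ((θ:ℂ) * I))^2 := by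
      rw [sq, ← Complex.exp_add, ← Complex.exp_add]; ring_nf
    have h2 : Complex.exp ((((k:ℂ)-2) * I) * θ) = Complex.exp ((k * I) * θ) * (Complex.exp (-(θ:ℂ) * I))^2 := by
      rw [sq, ← Complex.exp_add, ← Complex.exp_add]; ring_nf
    have h3 : Complex.exp ((θ:ℂ) * I) * Complex.exp (-(θ:ℂ) * I) = 1 := by
      rw [← Complex.exp_add]; ring_nf; exact Complex.exp_zero
    rw [hsin, h1, h2]
    linear_combination (Complex.exp ((k*I)*θ)/2) * h3 + (Complex.exp ((k*I)*θ) * (Complex.exp (-(θ:ℂ)*I) - Complex.exp ((θ:ℂ)*I))^2/4) * Complex.I_sq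
  simp only [hpt]
  have e1 : (((k:ℂ)+2) * I) = (((k+2:ℤ):ℂ) * I) := by push_cast; ring
  have e2 : (((k:ℂ)-2) * I) = (((k-2:ℤ):ℂ) * I) := by push_cast; ring
  rw [e1, e2]
  simp only [show ∀ a b c : ℂ, (2*a - b - c)/4 = (2/4)*a - (1/4)*b - (1/4)*c from by intros; ring]
  rw [integral_sub (((intexp _).const_mul _).sub ((intexp _).const_mul _)) ((intexp _).const_mul _),
    integral_sub ((intexp _).const_mul _) ((intexp _).const_mul _),
    integral_const_mul, integral_const_mul, integral_const_mul, Jlem, Jlem, Jlem]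

lemma Hlem (k : ℤ) : Iv k + Iv (-k)
    = if k = 0 then (Real.pi:ℂ)/1 else if k = 2 ∨ k = -2 then -((Real.pi:ℂ)/2) else 0 := by
  rw [Ilem, Ilem]
  by_cases h0 : k = 0
  · subst h0
    norm_num [Jv]; ring
  by_cases h2 : k = 2
  · subst h2
    norm_num [Jv]; ring
  by_cases h2' : k = -2
  · subst h2'
    norm_num [Jv]; ring
  · rw [if_neg h0, if_neg (by omega : ¬(k = 2 ∨ k = -2))]
    rw [show (-k + 2 : ℤ) = -(k - 2) by ring, show (-k - 2 : ℤ) = -(k + 2) by ring,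
      Jneg _ h0, Jneg _ (by omega), Jneg _ (by omega)]
    ring

lemma Ksum (n : ℕ) (t : ℝ) :
    (((∫ θ in (0:ℝ)..Real.pi, (1 + t^2 + 2*t*Real.cos θ)^n * Real.sin θ^2 : ℝ) : ℝ) : ℂ)
      = ∑ j ∈ range (n+1), ∑ l ∈ range (n+1),
          (n.choose j : ℂ) * (n.choose l) * (t:ℂ)^(j+l) * Iv ((j:ℤ) - (l:ℤ)) := by
  have key : ∀ θ : ℝ, ((1:ℂ) + (t:ℂ)^2 + 2*(t:ℂ)*Complex.cos θ)^n
      = ∑ j ∈ range (n+1), ∑ l ∈ range (n+1),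
          (n.choose j : ℂ) * (n.choose l) * (t:ℂ)^(j+l)
            * Complex.exp ((((j:ℤ) - (l:ℤ) : ℤ) : ℂ) * I * θ) := by
    intro θ
    set a := Complex.exp ((θ:ℂ)*I) with ha
    set b := Complex.exp (-(θ:ℂ)*I) with hb
    have hab : a * b = 1 := by
      rw [ha, hb, ← Complex.exp_add, show (θ:ℂ)*I + -(θ:ℂ)*I = 0 by ring, Complex.exp_zero]
    have hcos : Complex.cos θ = (a + b)/2 := rfl
    have hfac : ((1:ℂ) + (t:ℂ)^2 + 2*(t:ℂ)*Complex.cos θ) = ((t:ℂ)*a + 1)*((t:ℂ)*b + 1) := by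
      rw [hcos]; linear_combination (-(t:ℂ)^2) * hab
    rw [hfac, mul_pow, add_pow, add_pow, Finset.sum_mul_sum]
    apply Finset.sum_congr rfl; intro j _
    apply Finset.sum_congr rfl; intro l _
    have hab2 : a^j * b^l = Complex.exp ((((j:ℤ) - (l:ℤ) : ℤ) : ℂ) * I * θ) := by
      rw [ha, hb, show ((θ:ℂ)*I) = ((1:ℂ)*((θ:ℂ)*I)) by ring]
      rw [← Complex.exp_nat_mul, ← Complex.exp_nat_mul, ← Complex.exp_add]
      congr 1; push_cast; ring
    rw [mul_pow, mul_pow, one_pow, one_pow, pow_add]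
    linear_combination ((t:ℂ)^j*(t:ℂ)^l*(n.choose j:ℂ)*(n.choose l:ℂ)) * hab2
  rw [← intervalIntegral.integral_ofReal]
  have hpt : ∀ θ : ℝ, (((1 + t^2 + 2*t*Real.cos θ)^n * Real.sin θ^2 : ℝ) : ℂ)
      = ∑ j ∈ range (n+1), ∑ l ∈ range (n+1),
          (n.choose j : ℂ) * (n.choose l) * (t:ℂ)^(j+l)
            * (Complex.exp ((((j:ℤ) - (l:ℤ) : ℤ) : ℂ) * I * θ) * (Complex.sin θ)^2) := by
    intro θ
    push_cast [Complex.ofReal_cos, Complex.ofReal_sin]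
    rw [key θ, Finset.sum_mul]
    apply Finset.sum_congr rfl; intro j _
    rw [Finset.sum_mul]
    apply Finset.sum_congr rfl; intro l _
    rw [show ((((j:ℤ) - (l:ℤ) : ℤ)):ℂ) * I * (θ:ℂ) = I * θ * j - I * θ * l by push_cast; ring]
    ring
  simp only [hpt]
  rw [intervalIntegral.integral_finset_sum]
  · apply Finset.sum_congr rfl; intro j _
    rw [intervalIntegral.integral_finset_sum]
    · apply Finset.sum_congr rfl; intro l _
      rw [intervalIntegral.integral_const_mul]
      rfl
    · intro l _
      apply Continuous.intervalIntegrable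
      fun_prop
  · intro j _
    apply ContinuousOn.intervalIntegrable
    apply Continuous.continuousOn
    apply continuous_finset_sum
    intro l _
    fun_prop

lemma Ksum2 (n : ℕ) (t : ℝ) :
    (∑ j ∈ range (n+1), ∑ l ∈ range (n+1),
        (n.choose j : ℂ) * (n.choose l) * (t:ℂ)^(j+l) * Iv ((j:ℤ) - (l:ℤ)))
      = ((Real.pi:ℂ)/2) * (∑ j ∈ range (n+1), (n.choose j : ℂ)^2 * (t:ℂ)^(2*j))
        - ((Real.pi:ℂ)/2) * (∑ j ∈ range (n+1), (n.choose j : ℂ) * (n.choose (j+2)) * (t:ℂ)^(2*j+2)) := by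
  set S := ∑ j ∈ range (n+1), ∑ l ∈ range (n+1),
      (n.choose j : ℂ) * (n.choose l) * (t:ℂ)^(j+l) * Iv ((j:ℤ) - (l:ℤ)) with hS
  have hsymm : S = ∑ j ∈ range (n+1), ∑ l ∈ range (n+1),
      (n.choose j : ℂ) * (n.choose l) * (t:ℂ)^(j+l) * Iv ((l:ℤ) - (j:ℤ)) := by
    rw [hS, Finset.sum_comm]
    apply Finset.sum_congr rfl; intro j _
    apply Finset.sum_congr rfl; intro l _
    rw [Nat.add_comm l j]; ring
  have h2S : S = (1/2) * ∑ j ∈ range (n+1), ∑ l ∈ range (n+1),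
      (n.choose j : ℂ) * (n.choose l) * (t:ℂ)^(j+l) * (Iv ((j:ℤ) - (l:ℤ)) + Iv (-((j:ℤ) - (l:ℤ)))) := by
    have : S + S = ∑ j ∈ range (n+1), ∑ l ∈ range (n+1),
        (n.choose j : ℂ) * (n.choose l) * (t:ℂ)^(j+l) * (Iv ((j:ℤ) - (l:ℤ)) + Iv (-((j:ℤ) - (l:ℤ)))) := by
      nth_rewrite 2 [hsymm]
      rw [← Finset.sum_add_distrib]
      apply Finset.sum_congr rfl; intro j _
      rw [← Finset.sum_add_distrib]
      apply Finset.sum_congr rfl; intro l _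
      rw [show -((j:ℤ) - (l:ℤ)) = (l:ℤ) - j by ring]; ring
    linear_combination this / 2
  rw [h2S]
  have hval : ∀ j ∈ range (n+1), ∀ l ∈ range (n+1),
      (n.choose j : ℂ) * (n.choose l) * (t:ℂ)^(j+l) * (Iv ((j:ℤ) - (l:ℤ)) + Iv (-((j:ℤ) - (l:ℤ))))
        = (if l = j then (Real.pi:ℂ) * ((n.choose j : ℂ) * (n.choose l) * (t:ℂ)^(j+l)) else 0)
          + (if l = j + 2 then -((Real.pi:ℂ)/2) * ((n.choose j : ℂ) * (n.choose l) * (t:ℂ)^(j+l)) else 0)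
          + (if j = l + 2 then -((Real.pi:ℂ)/2) * ((n.choose j : ℂ) * (n.choose l) * (t:ℂ)^(j+l)) else 0) := by
    intro j _ l _
    rw [Hlem]
    by_cases h1 : l = j
    · subst h1
      have e1 : (l:ℤ) - (l:ℤ) = 0 := by ring
      have e2 : ¬ (l = l + 2) := by omega
      simp only [e1, if_pos rfl, e2, if_false, if_true, eq_self_iff_true]
      ring
    by_cases h2 : l = j + 2
    · subst h2
      have e1 : (j:ℤ) - ((j:ℕ)+2:ℕ) = -2 := by push_cast; ring
      have e2 : ¬ (j = j + 2 + 2) := by omega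
      have e3 : ¬ ((j:ℕ)+2 = j) := by omega
      rw [e1]
      norm_num [e2, e3]
      ring
    by_cases h3 : j = l + 2
    · subst h3
      have e1 : (((l:ℕ)+2:ℕ):ℤ) - (l:ℤ) = 2 := by push_cast; ring
      have e2 : ¬ ((l:ℕ) = l + 2 + 2) := by omega
      have e3 : ¬ ((l:ℕ) = l + 2) := by omega
      rw [e1]
      norm_num [e2, e3]
      ring
    · have e1 : ¬ ((j:ℤ) - (l:ℤ) = 0) := by omega
      have e2 : ¬ ((j:ℤ) - (l:ℤ) = 2 ∨ (j:ℤ) - (l:ℤ) = -2) := by omega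
      rw [if_neg e1, if_neg e2, if_neg h1, if_neg h2, if_neg h3]
      ring
  rw [Finset.sum_congr rfl (fun j hj => Finset.sum_congr rfl (fun l hl => hval j hj l hl))]
  simp only [Finset.sum_add_distrib]
  have T1 : ∀ x ∈ range (n+1),
      (∑ x1 ∈ range (n+1), if x1 = x then (Real.pi:ℂ) * ((n.choose x : ℂ) * (n.choose x1) * (t:ℂ)^(x+x1)) else 0)
        = (Real.pi:ℂ) * ((n.choose x : ℂ)^2 * (t:ℂ)^(2*x)) := by
    intro x hx
    rw [Finset.sum_ite_eq' (range (n+1)) x, if_pos hx, two_mul, sq]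
  have T2 : ∀ x ∈ range (n+1),
      (∑ x1 ∈ range (n+1), if x1 = x + 2 then -((Real.pi:ℂ)/2) * ((n.choose x : ℂ) * (n.choose x1) * (t:ℂ)^(x+x1)) else 0)
        = -((Real.pi:ℂ)/2) * ((n.choose x : ℂ) * (n.choose (x+2)) * (t:ℂ)^(2*x+2)) := by
    intro x hx
    rw [Finset.sum_ite_eq' (range (n+1)) (x+2)]
    split_ifs with h
    · rw [show 2*x+2 = x+(x+2) by ring]
    · rw [show n.choose (x+2) = 0 from Nat.choose_eq_zero_of_lt (by simp [Finset.mem_range] at h; omega)]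
      push_cast; ring
  have T3 : (∑ x ∈ range (n+1), ∑ x1 ∈ range (n+1),
        if x = x1 + 2 then -((Real.pi:ℂ)/2) * ((n.choose x : ℂ) * (n.choose x1) * (t:ℂ)^(x+x1)) else 0)
      = ∑ x1 ∈ range (n+1), -((Real.pi:ℂ)/2) * ((n.choose x1 : ℂ) * (n.choose (x1+2)) * (t:ℂ)^(2*x1+2)) := by
    rw [Finset.sum_comm]
    apply Finset.sum_congr rfl; intro x1 hx1
    rw [Finset.sum_ite_eq' (range (n+1)) (x1+2)]
    split_ifs with h
    · rw [show 2*x1+2 = x1+2+x1 by ring]; ring_nf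
    · rw [show n.choose (x1+2) = 0 from Nat.choose_eq_zero_of_lt (by simp [Finset.mem_range] at h; omega)]
      push_cast; ring
  rw [Finset.sum_congr rfl T1, Finset.sum_congr rfl T2, T3, ← Finset.mul_sum, ← Finset.mul_sum]
  ring


lemma perterm (s m d : ℕ) (hs : s = m + 2 + d) :
    (1/((s:ℝ)+1)) * ((s+1).choose (m+1)) * ((s+1).choose (m+2))
      = ((s.choose (m+1) : ℝ))^2 - (s.choose m : ℝ) * (s.choose (m+2)) := by
  subst hs
  rw [Nat.cast_choose ℝ (by omega : m+1 ≤ m+2+d+1), Nat.cast_choose ℝ (by omega : m+2 ≤ m+2+d+1),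
    Nat.cast_choose ℝ (by omega : m+1 ≤ m+2+d), Nat.cast_choose ℝ (by omega : m ≤ m+2+d),
    Nat.cast_choose ℝ (by omega : m+2 ≤ m+2+d)]
  have e1 : m+2+d+1 - (m+1) = d + 2 := by omega
  have e2 : m+2+d+1 - (m+2) = d + 1 := by omega
  have e3 : m+2+d - (m+1) = d + 1 := by omega
  have e4 : m+2+d - m = d + 2 := by omega
  have e5 : m+2+d - (m+2) = d := by omega
  rw [e1, e2, e3, e4, e5]
  have f1 : (Nat.factorial (m+2+d+1) : ℝ) = ((m:ℝ)+(d:ℝ)+3) * Nat.factorial (m+2+d) := by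
    rw [show m+2+d+1 = (m+2+d)+1 by ring, Nat.factorial_succ]; push_cast; ring
  have f2 : (Nat.factorial (m+2) : ℝ) = ((m:ℝ)+2) * ((m:ℝ)+1) * Nat.factorial m := by
    rw [show m+2 = (m+1)+1 by ring, Nat.factorial_succ, Nat.factorial_succ]; push_cast; ring
  have f3 : (Nat.factorial (m+1) : ℝ) = ((m:ℝ)+1) * Nat.factorial m := by
    rw [Nat.factorial_succ]; push_cast; ring
  have f4 : (Nat.factorial (d+2) : ℝ) = ((d:ℝ)+2) * ((d:ℝ)+1) * Nat.factorial d := by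
    rw [show d+2 = (d+1)+1 by ring, Nat.factorial_succ, Nat.factorial_succ]; push_cast; ring
  have f5 : (Nat.factorial (d+1) : ℝ) = ((d:ℝ)+1) * Nat.factorial d := by
    rw [Nat.factorial_succ]; push_cast; ring
  rw [f1, f2, f3, f4, f5]
  have hm : (Nat.factorial m : ℝ) ≠ 0 := by positivity
  have hd : (Nat.factorial d : ℝ) ≠ 0 := by positivity
  have h1 : ((m:ℝ)+1) ≠ 0 := by positivity
  have h2 : ((m:ℝ)+2) ≠ 0 := by positivity
  have h3 : ((d:ℝ)+1) ≠ 0 := by positivity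
  have h4 : ((d:ℝ)+2) ≠ 0 := by positivity
  have h5 : ((m:ℝ)+(d:ℝ)+3) ≠ 0 := by positivity
  have h6 : ((m:ℝ)+2+(d:ℝ)+1) ≠ 0 := by push_cast; intro h; nlinarith [h]
  field_simp
  push_cast; ring

lemma perterm' (s i : ℕ) (hi : i ≤ s) :
    (1/((s:ℝ)+1)) * ((s+1).choose i) * ((s+1).choose (i+1))
      = ((s.choose i : ℝ))^2 - (if i = 0 then 0 else (s.choose (i-1) : ℝ) * (s.choose (i+1))) := by
  match i with
  | 0 =>
    simp [Nat.choose_one_right]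
    have : ((s:ℝ)+1) ≠ 0 := by positivity
    field_simp
  | (m+1) =>
    simp only [Nat.add_sub_cancel, if_neg (Nat.succ_ne_zero m)]
    by_cases h : m + 2 ≤ s
    · exact perterm s m (s - m - 2) (by omega)
    · have hs : s = m + 1 := by omega
      subst hs
      rw [Nat.choose_succ_self_right]
      simp [Nat.choose_self, Nat.choose_succ_self]
      have : ((m:ℝ)+1+1) ≠ 0 := by positivity
      field_simp

lemma keycomb (r : ℕ) (hr : 1 ≤ r) (z : ℝ) :
    ∑ k ∈ Finset.Icc 1 r, (1 / (r : ℝ)) * (r.choose (k - 1)) * (r.choose k) * z ^ (k - 1)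
      = (∑ j ∈ range r, ((r-1).choose j : ℝ)^2 * z^j)
        - ∑ j ∈ range r, ((r-1).choose j : ℝ) * ((r-1).choose (j+2)) * z^(j+1) := by
  obtain ⟨s, rfl⟩ : ∃ s, r = s + 1 := ⟨r - 1, by omega⟩
  simp only [Nat.add_sub_cancel]
  rw [show Finset.Icc 1 (s+1) = Finset.Ico 1 (s+2) from by rw [← Finset.Ico_add_one_right_eq_Icc]; rfl,
    Finset.sum_Ico_eq_sum_range]
  simp only [show s + 2 - 1 = s + 1 by omega]
  have h2 : ∑ j ∈ range (s+1), (s.choose j : ℝ) * (s.choose (j+2)) * z^(j+1)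
      = ∑ i ∈ range (s+1), (if i = 0 then 0 else (s.choose (i-1) : ℝ) * (s.choose (i+1)) * z^i) := by
    rw [Finset.sum_range_succ, Finset.sum_range_succ']
    simp [Nat.choose_eq_zero_of_lt (show s < s + 2 by omega)]
  rw [h2, ← Finset.sum_sub_distrib]
  apply Finset.sum_congr rfl
  intro i hi
  have hi' : i ≤ s := by simpa [Nat.lt_succ_iff] using hi
  have key := perterm' s i hi'
  have hp : (1/((s:ℝ)+1)) * (((s+1).choose ((1+i)-1) : ℕ) : ℝ) * (((s+1).choose (1+i) : ℕ) : ℝ) * z^((1+i)-1)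
      = ((1/((s:ℝ)+1)) * ((s+1).choose i) * ((s+1).choose (i+1))) * z^i := by
    rw [show (1+i)-1 = i by omega, show 1+i = i+1 by omega]
  rw [show ((s:ℝ)+1) = ((s+1 : ℕ) : ℝ) by push_cast; ring] at hp
  push_cast at hp ⊢
  rw [hp, key]
  split_ifs with h <;> ring

theorem narayana_as_semicircle_expectation (r : ℕ) (hr : 1 ≤ r) (z : ℝ) (hz : 0 ≤ z) :
    ∑ k ∈ Finset.Icc 1 r,
        (1 / (r : ℝ)) * (r.choose (k - 1)) * (r.choose k) * z ^ (k - 1) =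
      ∫ x in (-1 : ℝ)..1,
        (1 + z + 2 * Real.sqrt z * x) ^ (r - 1) * ((2 / Real.pi) * Real.sqrt (1 - x ^ 2)) := by
  have hπ : (Real.pi : ℝ) ≠ 0 := Real.pi_ne_zero
  set t := Real.sqrt z with htdef
  have ht2 : t^2 = z := Real.sq_sqrt hz
  set n := r - 1 with hn
  have hn1 : n + 1 = r := by omega
  set g : ℝ → ℝ := fun x => (1 + z + 2 * t * x) ^ n * ((2 / Real.pi) * Real.sqrt (1 - x ^ 2))
    with hgdef
  have hgc : Continuous g := by
    apply Continuous.mul (by fun_prop)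
    apply Continuous.mul continuous_const
    exact (continuous_const.sub (continuous_pow 2)).sqrt
  have h1 := intervalIntegral.integral_comp_smul_deriv (a := 0) (b := Real.pi)
    (f := Real.cos) (f' := fun θ => -Real.sin θ) (g := g)
    (fun x _ => Real.hasDerivAt_cos x) (by fun_prop) hgc
  rw [Real.cos_zero, Real.cos_pi] at h1
  have hsymm : (∫ x in (1:ℝ)..(-1:ℝ), g x) = - ∫ x in (-1:ℝ)..1, g x :=
    intervalIntegral.integral_symm (-1 : ℝ) 1
  have h1' : (∫ θ in (0:ℝ)..Real.pi, -(Real.sin θ * g (Real.cos θ))) = ∫ x in (1:ℝ)..(-1:ℝ), g x := by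
    rw [← h1]
    apply intervalIntegral.integral_congr
    intro θ _
    simp [smul_eq_mul]
  rw [intervalIntegral.integral_neg, hsymm] at h1'
  have h2 : (∫ x in (-1:ℝ)..1, g x)
      = ∫ θ in (0:ℝ)..Real.pi, Real.sin θ * g (Real.cos θ) := by linarith
  have h3 : (∫ θ in (0:ℝ)..Real.pi, Real.sin θ * g (Real.cos θ))
      = ∫ θ in (0:ℝ)..Real.pi, (2/Real.pi) * ((1 + t^2 + 2*t*Real.cos θ)^n * Real.sin θ^2) := by
    apply intervalIntegral.integral_congr
    intro θ hθ
    rw [Set.uIcc_of_le Real.pi_nonneg] at hθ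
    have hs : 0 ≤ Real.sin θ := Real.sin_nonneg_of_nonneg_of_le_pi hθ.1 hθ.2
    have hcs : 1 - Real.cos θ^2 = Real.sin θ^2 := by
      have := Real.sin_sq_add_cos_sq θ; linarith
    rw [hgdef]
    simp only []
    rw [hcs, Real.sqrt_sq hs, ht2]
    ring
  have h4 : (∫ θ in (0:ℝ)..Real.pi, (2/Real.pi) * ((1 + t^2 + 2*t*Real.cos θ)^n * Real.sin θ^2))
      = (2/Real.pi) * ∫ θ in (0:ℝ)..Real.pi, (1 + t^2 + 2*t*Real.cos θ)^n * Real.sin θ^2 :=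
    intervalIntegral.integral_const_mul _ _
  set K := ∫ θ in (0:ℝ)..Real.pi, (1 + t^2 + 2*t*Real.cos θ)^n * Real.sin θ^2 with hKdef
  set A := ∑ j ∈ range (n+1), ((n.choose j : ℝ))^2 * z^j with hA
  set B := ∑ j ∈ range (n+1), ((n.choose j : ℝ)) * (n.choose (j+2)) * z^(j+1) with hB
  have hz2 : ((t:ℂ))^2 = (z:ℂ) := by rw [← ht2]; push_cast; ring
  have hKc : ((K : ℝ) : ℂ) = (((Real.pi/2) * (A - B) : ℝ) : ℂ) := by
    rw [hKdef, Ksum n t, Ksum2 n t]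
    have eA : (∑ j ∈ range (n+1), (n.choose j : ℂ)^2 * (t:ℂ)^(2*j))
        = ∑ j ∈ range (n+1), (n.choose j : ℂ)^2 * (z:ℂ)^j := by
      apply Finset.sum_congr rfl; intro j _
      rw [pow_mul, hz2]
    have eB : (∑ j ∈ range (n+1), (n.choose j : ℂ) * (n.choose (j+2)) * (t:ℂ)^(2*j+2))
        = ∑ j ∈ range (n+1), (n.choose j : ℂ) * (n.choose (j+2)) * (z:ℂ)^(j+1) := by
      apply Finset.sum_congr rfl; intro j _
      rw [pow_add, pow_mul, hz2, ← pow_succ]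
    rw [eA, eB, hA, hB]
    push_cast
    ring
  have hK : K = (Real.pi/2) * (A - B) := by exact_mod_cast hKc
  have hfinal : (∫ x in (-1:ℝ)..1, g x) = A - B := by
    rw [h2, h3, h4, hK]
    field_simp
  rw [keycomb r hr z, hfinal, ← hn1]
  simp only [Nat.add_sub_cancel, hA, hB]
end

section
/- For n > 1, the Bernoulli numbers satisfy Σ_{k=1}^{n-1} C(2n, 2k) B_{2k} B_{2n-2k} = -(2n+1) B_{2n}. -/
open PowerSeries Finset Nat

lemma my_derivative_exp : d⁄dX ℚ (PowerSeries.exp ℚ) = PowerSeries.exp ℚ := by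
  ext n
  rw [coeff_derivative, coeff_exp, coeff_exp]
  simp only [eq_ratCast, Rat.cast_div, Rat.cast_one, Rat.cast_natCast]
  rw [factorial_succ]
  push_cast
  have : (n ! : ℚ) ≠ 0 := by exact_mod_cast factorial_ne_zero n
  field_simp

lemma key_ps : (bernoulliPowerSeries ℚ) ^ 2 =
    bernoulliPowerSeries ℚ - X * bernoulliPowerSeries ℚ - X * (d⁄dX ℚ (bernoulliPowerSeries ℚ)) := by
  set P := bernoulliPowerSeries ℚ with hP
  set E := PowerSeries.exp ℚ with hEdef
  have h1 : P * (E - 1) = X := bernoulliPowerSeries_mul_exp_sub_one ℚ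
  have hE : (E - 1) ≠ 0 := by
    intro h
    have := congrArg (coeff 1) h
    simp [hEdef, coeff_exp] at this
  have hd : (d⁄dX ℚ P) * (E - 1) + P * E = 1 := by
    have := congrArg (d⁄dX ℚ) h1
    rw [Derivation.leibniz, derivative_X] at this
    rw [hEdef] at this
    simp only [map_sub, my_derivative_exp, Derivation.map_one_eq_zero, sub_zero, smul_eq_mul] at this
    rw [← hEdef] at this
    linear_combination this
  have hQ : P ^ 2 * (E - 1) ^ 2 = (P - X * P - X * (d⁄dX ℚ P)) * (E - 1) ^ 2 := by
    linear_combination (P * (E - 1) + X - (E - 1) + X * (E - 1) - X * E) * h1 + X * (E - 1) * hd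
  exact mul_right_cancel₀ (pow_ne_zero 2 hE) hQ

lemma coeff_bps (k : ℕ) : coeff k (bernoulliPowerSeries ℚ) = bernoulli k / k ! := by
  simp [bernoulliPowerSeries, coeff_mk]

lemma sum_choose_bernoulli (m : ℕ) (hm : 1 ≤ m) :
    ∑ p ∈ antidiagonal m, (m.choose p.1 : ℚ) * bernoulli p.1 * bernoulli p.2
      = (1 - m) * bernoulli m - m * bernoulli (m - 1) := by
  obtain ⟨m', rfl⟩ : ∃ m', m = m' + 1 := ⟨m - 1, by omega⟩
  have h := congrArg (coeff (m' + 1)) key_ps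
  rw [pow_two, coeff_mul, map_sub, map_sub, coeff_succ_X_mul, coeff_succ_X_mul,
    coeff_derivative] at h
  simp only [coeff_bps] at h
  have step : ∑ p ∈ antidiagonal (m' + 1), ((m' + 1).choose p.1 : ℚ) * bernoulli p.1 * bernoulli p.2
      = (m' + 1)! * ∑ p ∈ antidiagonal (m' + 1),
          bernoulli p.1 / p.1 ! * (bernoulli p.2 / p.2 !) := by
    rw [Finset.mul_sum]
    refine Finset.sum_congr rfl ?_
    rintro ⟨i, j⟩ hij
    rw [HasAntidiagonal.mem_antidiagonal] at hij
    have h2 : ((m' + 1).choose i : ℚ) * i ! * j ! = (m' + 1)! := by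
      have hle : i ≤ m' + 1 := by omega
      have := Nat.choose_mul_factorial_mul_factorial hle
      rw [show m' + 1 - i = j by omega] at this
      exact_mod_cast this
    have hi : (i ! : ℚ) ≠ 0 := by exact_mod_cast factorial_ne_zero i
    have hj : (j ! : ℚ) ≠ 0 := by exact_mod_cast factorial_ne_zero j
    field_simp
    linear_combination bernoulli i * bernoulli j * h2
  rw [step, h]
  have hm' : ((m' + 1)! : ℚ) ≠ 0 := by exact_mod_cast factorial_ne_zero (m' + 1)
  have hmm : ((m')! : ℚ) ≠ 0 := by exact_mod_cast factorial_ne_zero m'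
  have hfact : ((m' + 1)! : ℚ) = (m' + 1) * m' ! := by exact_mod_cast factorial_succ m'
  simp only [Nat.add_sub_cancel]
  push_cast
  field_simp [hfact]
  rw [hfact]
  ring

lemma bernoulli_odd_zero {m : ℕ} (h : Odd m) (h1 : 1 < m) : bernoulli m = 0 := by
  rw [bernoulli_eq_bernoulli'_of_ne_one (by omega)]
  exact bernoulli'_eq_zero_of_odd h h1

theorem bernoulli_quadratic_identity (n : ℕ) (hn : 1 < n) :
    ∑ k ∈ Finset.Icc 1 (n - 1),
        ((2 * n).choose (2 * k) : ℚ) * bernoulli (2 * k) * bernoulli (2 * n - 2 * k) =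
      -(2 * (n : ℚ) + 1) * bernoulli (2 * n) := by
  set f : ℕ → ℚ := fun k => ((2 * n).choose k : ℚ) * bernoulli k * bernoulli (2 * n - k) with hf
  have hS : ∑ k ∈ range (2 * n + 1), f k = (1 - 2 * n) * bernoulli (2 * n) := by
    have h := sum_choose_bernoulli (2 * n) (by omega)
    rw [Finset.Nat.sum_antidiagonal_eq_sum_range_succ_mk] at h
    rw [bernoulli_odd_zero (m := 2 * n - 1) ⟨n - 1, by omega⟩ (by omega)] at h
    push_cast at h
    simpa using h
  have hodd : ∀ k ∈ range (2 * n + 1), f k ≠ 0 → Even k := by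
    intro k _ hfk
    by_contra hodd
    rw [Nat.not_even_iff_odd] at hodd
    apply hfk
    rcases eq_or_lt_of_le (show 1 ≤ k from hodd.pos) with h1 | h1
    · subst h1
      show ((2 * n).choose 1 : ℚ) * bernoulli 1 * bernoulli (2 * n - 1) = 0
      rw [bernoulli_odd_zero (m := 2 * n - 1) ⟨n - 1, by omega⟩ (by omega)]
      ring
    · show ((2 * n).choose k : ℚ) * bernoulli k * bernoulli (2 * n - k) = 0
      rw [bernoulli_odd_zero (m := k) hodd h1]
      ring
  have heven : ∑ k ∈ range (2 * n + 1), f k = ∑ j ∈ range (n + 1), f (2 * j) := by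
    rw [← Finset.sum_filter_of_ne hodd]
    apply Finset.sum_nbij' (fun k => k / 2) (fun j => 2 * j)
    · intro a ha
      simp only [mem_filter, mem_range] at ha
      simp only [mem_range]
      omega
    · intro a ha
      simp only [mem_range] at ha
      simp only [mem_filter, mem_range]
      exact ⟨by omega, ⟨a, by omega⟩⟩
    · intro a ha
      simp only [mem_filter, mem_range] at ha
      obtain ⟨c, hc⟩ := ha.2
      omega
    · intro a _; omega
    · intro a ha
      simp only [mem_filter, mem_range] at ha
      obtain ⟨c, hc⟩ := ha.2
      congr 1
      omega
  have hsplit : ∑ j ∈ range (n + 1), f (2 * j)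
      = f 0 + (∑ k ∈ Finset.Icc 1 (n - 1), f (2 * k)) + f (2 * n) := by
    rw [Finset.sum_range_succ]
    congr 1
    rw [← Finset.Ico_add_one_right_eq_Icc, show n - 1 + 1 = n by omega, Finset.range_eq_Ico,
      Finset.sum_eq_sum_Ico_succ_bot (by omega)]
  have hf0 : f 0 = bernoulli (2 * n) := by
    show ((2 * n).choose 0 : ℚ) * bernoulli 0 * bernoulli (2 * n - 0) = _
    simp
  have hfN : f (2 * n) = bernoulli (2 * n) := by
    show ((2 * n).choose (2 * n) : ℚ) * bernoulli (2 * n) * bernoulli (2 * n - 2 * n) = _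
    simp
  have hgoal : (∑ k ∈ Finset.Icc 1 (n - 1),
      ((2 * n).choose (2 * k) : ℚ) * bernoulli (2 * k) * bernoulli (2 * n - 2 * k))
      = ∑ k ∈ Finset.Icc 1 (n - 1), f (2 * k) := rfl
  rw [hgoal]
  have := hS
  rw [heven, hsplit, hf0, hfN] at this
  linarith [this]
end
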